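/- arXiv:2310.07595 — 9 statements merged into one kernel-verified Lean document; each statement's English description precedes it below -/
import Mathlib

section
/- Let I be a finite set of positive integers partitioned as I = B ∪ T with B and T disjoint. If |𝒮(B)| · |𝒮(T)| > Σ(B) + Σ(T) + 1, then there exist disjoint subsets X, Y ⊆ I with Σ(X) = Σ(Y) and (X ∪ Y) ∩ T ≠ ∅. -/
/-- **Refined Pigeonhole (Lemma 4.4).** If `I = B ∪ T` (disjoint) consists of positive
integers and `|𝒮(B)| · |𝒮(T)| > Σ(B) + Σ(T) + 1`, then there are disjoint `X, Y ⊆ I`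
with `Σ(X) = Σ(Y)` and `(X ∪ Y) ∩ T ≠ ∅`. -/
theorem refined_pigeonhole (B T : Finset ℕ) (hBT : Disjoint B T)
    (hpos : ∀ x ∈ B ∪ T, 0 < x)
    (h : (Finset.image (fun Y => Y.sum id) B.powerset).card *
         (Finset.image (fun Y => Y.sum id) T.powerset).card > B.sum id + T.sum id + 1) :
    ∃ X Y : Finset ℕ, X ⊆ B ∪ T ∧ Y ⊆ B ∪ T ∧ Disjoint X Y ∧
      X.sum id = Y.sum id ∧ ((X ∪ Y) ∩ T).Nonempty := by
  classical
  set SB := Finset.image (fun Y => Y.sum id) B.powerset with hSB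
  set ST := Finset.image (fun Y => Y.sum id) T.powerset with hST
  -- pigeonhole on the map (b, t) ↦ b + t
  have hmaps : ∀ p ∈ SB ×ˢ ST, p.1 + p.2 ∈ Finset.range (B.sum id + T.sum id + 1) := by
    rintro ⟨b, t⟩ hp
    rw [Finset.mem_product] at hp
    obtain ⟨hb, ht⟩ := hp
    simp only [hSB, hST, Finset.mem_image] at hb ht
    obtain ⟨Y1, hY1, rfl⟩ := hb
    obtain ⟨Y2, hY2, rfl⟩ := ht
    rw [Finset.mem_powerset] at hY1 hY2
    have h1 : Y1.sum id ≤ B.sum id := Finset.sum_le_sum_of_subset hY1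
    have h2 : Y2.sum id ≤ T.sum id := Finset.sum_le_sum_of_subset hY2
    simp only [Finset.mem_range]
    omega
  have hcard : (Finset.range (B.sum id + T.sum id + 1)).card < (SB ×ˢ ST).card := by
    rw [Finset.card_range, Finset.card_product]
    exact h
  obtain ⟨p, hp, q, hq, hpq, hfeq⟩ :=
    Finset.exists_ne_map_eq_of_card_lt_of_maps_to hcard hmaps
  rw [Finset.mem_product] at hp hq
  obtain ⟨hp1, hp2⟩ := hp
  obtain ⟨hq1, hq2⟩ := hq
  have ht_ne : p.2 ≠ q.2 := by
    intro hne
    apply hpq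
    have : p.1 = q.1 := by omega
    exact Prod.ext this hne
  simp only [hSB, hST, Finset.mem_image, Finset.mem_powerset] at hp1 hp2 hq1 hq2
  obtain ⟨B1, hB1, hB1s⟩ := hp1
  obtain ⟨T1, hT1, hT1s⟩ := hp2
  obtain ⟨B2, hB2, hB2s⟩ := hq1
  obtain ⟨T2, hT2, hT2s⟩ := hq2
  set X := B1 ∪ T1 with hX
  set Y := B2 ∪ T2 with hY
  have hdBT1 : Disjoint B1 T1 := hBT.mono hB1 hT1
  have hdBT2 : Disjoint B2 T2 := hBT.mono hB2 hT2
  have hXs : X.sum id = p.1 + p.2 := by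
    rw [hX, Finset.sum_union hdBT1, hB1s, hT1s]
  have hYs : Y.sum id = q.1 + q.2 := by
    rw [hY, Finset.sum_union hdBT2, hB2s, hT2s]
  have hXsub : X ⊆ B ∪ T := Finset.union_subset_union hB1 hT1
  have hYsub : Y ⊆ B ∪ T := Finset.union_subset_union hB2 hT2
  refine ⟨X \ Y, Y \ X, (Finset.sdiff_subset).trans hXsub, (Finset.sdiff_subset).trans hYsub,
    disjoint_sdiff_sdiff, ?_, ?_⟩
  · -- equal sums
    have e1 : (X \ Y).sum id + (X ∩ Y).sum id = X.sum id := by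
      rw [← Finset.sum_union (Finset.disjoint_sdiff_inter X Y), Finset.sdiff_union_inter]
    have e2 : (Y \ X).sum id + (Y ∩ X).sum id = Y.sum id := by
      rw [← Finset.sum_union (Finset.disjoint_sdiff_inter Y X), Finset.sdiff_union_inter]
    rw [Finset.inter_comm Y X] at e2
    omega
  · -- an element of T in the symmetric difference
    have hTne : T1 ≠ T2 := by
      intro hEq; apply ht_ne; rw [← hT1s, ← hT2s, hEq]
    have : ∃ a, (a ∈ T1 ∧ a ∉ T2) ∨ (a ∈ T2 ∧ a ∉ T1) := by
      by_contra hcon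
      push_neg at hcon
      apply hTne
      exact Finset.Subset.antisymm (fun a ha => (hcon a).1 ha) (fun a ha => (hcon a).2 ha)
    obtain ⟨a, ha⟩ := this
    rcases ha with ⟨haT1, haT2⟩ | ⟨haT2, haT1⟩
    · have haT : a ∈ T := hT1 haT1
      have haB2 : a ∉ B2 := fun hmem => (Finset.disjoint_left.mp hBT) (hB2 hmem) haT
      refine ⟨a, ?_⟩
      rw [Finset.mem_inter, Finset.mem_union]
      refine ⟨Or.inl ?_, haT⟩
      rw [Finset.mem_sdiff]
      exact ⟨Finset.mem_union_right _ haT1, by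
        rw [hY, Finset.mem_union]; push_neg; exact ⟨haB2, haT2⟩⟩
    · have haT : a ∈ T := hT2 haT2
      have haB1 : a ∉ B1 := fun hmem => (Finset.disjoint_left.mp hBT) (hB1 hmem) haT
      refine ⟨a, ?_⟩
      rw [Finset.mem_inter, Finset.mem_union]
      refine ⟨Or.inr ?_, haT⟩
      rw [Finset.mem_sdiff]
      exact ⟨Finset.mem_union_right _ haT2, by
        rw [hX, Finset.mem_union]; push_neg; exact ⟨haB1, haT1⟩⟩
end

section
/- Let I be a finite set of positive reals of size n ≥ 2 with elements listed in sorted order I[1] ≤ … ≤ I[n], and write I[1..ℓ] := {I[1], …, I[ℓ]}. Then OPT(I) = min over 2 ≤ ℓ ≤ n of OPT_L(I[1..ℓ]). -/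
/-- The ratio `R(X,Y) = max{Σ(X)/Σ(Y), Σ(Y)/Σ(X)}` of two finite sets of reals. -/
noncomputable def ratio (X Y : Finset ℝ) : ℝ :=
  max (X.sum id / Y.sum id) (Y.sum id / X.sum id)

/-- `OPT(I)`: the minimum ratio over all nonempty disjoint subsets `X, Y ⊆ I`. -/
noncomputable def OPT (I : Finset ℝ) : ℝ :=
  sInf {r | ∃ X Y : Finset ℝ, X ⊆ I ∧ Y ⊆ I ∧ Disjoint X Y ∧
    X.Nonempty ∧ Y.Nonempty ∧ r = ratio X Y}

/-- `OPT_L(I)`: the minimum ratio over all nonempty disjoint subsets `X, Y ⊆ I` such that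
`max(I) ∈ X ∪ Y` (i.e. some element of `X ∪ Y` is an upper bound of `I`). -/
noncomputable def OPTL (I : Finset ℝ) : ℝ :=
  sInf {r | ∃ X Y : Finset ℝ, X ⊆ I ∧ Y ⊆ I ∧ Disjoint X Y ∧
    X.Nonempty ∧ Y.Nonempty ∧ (∃ m ∈ X ∪ Y, ∀ x ∈ I, x ≤ m) ∧ r = ratio X Y}

/-- **Equation (2).** For a sorted set `I = {a 1 < … < a n}` of positive reals,
`OPT(I) = min_{2 ≤ ℓ ≤ n} OPT_L(I[1..ℓ])`. -/
theorem opt_eq_min_optL_prefixes (n : ℕ) (hn : 2 ≤ n) (a : ℕ → ℝ)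
    (hpos : ∀ i ∈ Finset.Icc 1 n, 0 < a i)
    (hsorted : ∀ i j, 1 ≤ i → i < j → j ≤ n → a i < a j)
    (I : Finset ℝ) (hI : I = (Finset.Icc 1 n).image a) :
    OPT I = (Finset.Icc 2 n).inf' (Finset.nonempty_Icc.mpr hn)
      (fun ℓ => OPTL ((Finset.Icc 1 ℓ).image a)) := by
  have hmono : ∀ i j, 1 ≤ i → i ≤ j → j ≤ n → a i ≤ a j := by
    intro i j h1 hij hj
    rcases eq_or_lt_of_le hij with rfl | h
    · exact le_rfl
    · exact (hsorted i j h1 h hj).le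
  set S : Set ℝ := {r | ∃ X Y : Finset ℝ, X ⊆ I ∧ Y ⊆ I ∧ Disjoint X Y ∧
    X.Nonempty ∧ Y.Nonempty ∧ r = ratio X Y} with hSdef
  set SL : ℕ → Set ℝ := fun ℓ =>
    {r | ∃ X Y : Finset ℝ, X ⊆ (Finset.Icc 1 ℓ).image a ∧
      Y ⊆ (Finset.Icc 1 ℓ).image a ∧ Disjoint X Y ∧ X.Nonempty ∧ Y.Nonempty ∧
      (∃ m ∈ X ∪ Y, ∀ x ∈ (Finset.Icc 1 ℓ).image a, x ≤ m) ∧ r = ratio X Y} with hSLdef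
  have hOPT : OPT I = sInf S := rfl
  have hOPTL : ∀ ℓ : ℕ, OPTL ((Finset.Icc 1 ℓ).image a) = sInf (SL ℓ) := fun _ => rfl
  -- S is bounded below by 0
  have hSbdd : BddBelow S := by
    refine ⟨0, fun r hr => ?_⟩
    obtain ⟨X, Y, hX, hY, _, _, _, rfl⟩ := hr
    have hXs : (0:ℝ) ≤ X.sum id := Finset.sum_nonneg fun x hx => by
      have := hX hx; rw [hI] at this
      obtain ⟨i, hi, rfl⟩ := Finset.mem_image.mp this
      exact (hpos i hi).le
    have hYs : (0:ℝ) ≤ Y.sum id := Finset.sum_nonneg fun x hx => by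
      have := hY hx; rw [hI] at this
      obtain ⟨i, hi, rfl⟩ := Finset.mem_image.mp this
      exact (hpos i hi).le
    exact le_trans (div_nonneg hXs hYs) (le_max_left _ _)
  -- S is finite
  have hSfin : S.Finite := by
    apply Set.Finite.subset
      (Finset.finite_toSet ((I.powerset ×ˢ I.powerset).image fun p => ratio p.1 p.2))
    rintro r ⟨X, Y, hX, hY, _, _, _, rfl⟩
    simp only [Finset.coe_image, Set.mem_image, Finset.mem_coe, Finset.mem_product,
      Finset.mem_powerset]
    exact ⟨(X, Y), ⟨hX, hY⟩, rfl⟩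
  -- each SL ℓ (for ℓ ∈ [2,n]) is nonempty and contained in S
  have hSLsub : ∀ ℓ ∈ Finset.Icc 2 n, SL ℓ ⊆ S := by
    intro ℓ hℓ r hr
    obtain ⟨hℓ2, hℓn⟩ := Finset.mem_Icc.mp hℓ
    obtain ⟨X, Y, hX, hY, hD, hXne, hYne, _, rfl⟩ := hr
    have hsub : (Finset.Icc 1 ℓ).image a ⊆ I := by
      rw [hI]; exact Finset.image_subset_image (Finset.Icc_subset_Icc_right hℓn)
    exact ⟨X, Y, hX.trans hsub, hY.trans hsub, hD, hXne, hYne, rfl⟩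
  have hSLne : ∀ ℓ ∈ Finset.Icc 2 n, (SL ℓ).Nonempty := by
    intro ℓ hℓ
    obtain ⟨hℓ2, hℓn⟩ := Finset.mem_Icc.mp hℓ
    have h1ℓ : (1:ℕ) ≤ ℓ := le_trans one_le_two hℓ2
    have hlt : a 1 < a ℓ := hsorted 1 ℓ le_rfl (lt_of_lt_of_le one_lt_two hℓ2) hℓn
    refine ⟨ratio {a 1} {a ℓ}, {a 1}, {a ℓ}, ?_, ?_, ?_, ⟨_, Finset.mem_singleton_self _⟩,
      ⟨_, Finset.mem_singleton_self _⟩, ⟨a ℓ, ?_, ?_⟩, rfl⟩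
    · intro x hx
      rw [Finset.mem_singleton.mp hx]
      exact Finset.mem_image.mpr ⟨1, Finset.mem_Icc.mpr ⟨le_rfl, h1ℓ⟩, rfl⟩
    · intro x hx
      rw [Finset.mem_singleton.mp hx]
      exact Finset.mem_image.mpr ⟨ℓ, Finset.mem_Icc.mpr ⟨h1ℓ, le_rfl⟩, rfl⟩
    · simp [Finset.disjoint_singleton, hlt.ne, hlt.ne']
    · exact Finset.mem_union_right _ (Finset.mem_singleton_self _)
    · intro x hx
      obtain ⟨i, hi, rfl⟩ := Finset.mem_image.mp hx
      obtain ⟨hi1, hiℓ⟩ := Finset.mem_Icc.mp hi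
      exact hmono i ℓ hi1 hiℓ hℓn
  -- S is nonempty
  have h2mem : (2:ℕ) ∈ Finset.Icc 2 n := Finset.mem_Icc.mpr ⟨le_rfl, hn⟩
  have hSne : S.Nonempty := (hSLne 2 h2mem).mono (hSLsub 2 h2mem)
  apply le_antisymm
  · rw [hOPT]
    apply Finset.le_inf'
    intro ℓ hℓ
    rw [hOPTL]
    exact csInf_le_csInf hSbdd (hSLne ℓ hℓ) (hSLsub ℓ hℓ)
  · -- the minimizer of S lies in some SL ℓ₀
    have hmem : sInf S ∈ S := hSne.csInf_mem hSfin
    obtain ⟨X, Y, hX, hY, hD, hXne, hYne, hrat⟩ := hmem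
    set T : Finset ℝ := X ∪ Y with hTdef
    have hTne : T.Nonempty := Finset.Nonempty.mono Finset.subset_union_left hXne
    set M : ℝ := T.max' hTne with hMdef
    have hMT : M ∈ T := T.max'_mem hTne
    have hMI : M ∈ I := by
      rcases Finset.mem_union.mp hMT with h | h
      · exact hX h
      · exact hY h
    rw [hI] at hMI
    obtain ⟨ℓ₀, hℓ₀, hMa⟩ := Finset.mem_image.mp hMI
    obtain ⟨hℓ₀1, hℓ₀n⟩ := Finset.mem_Icc.mp hℓ₀
    -- index of any element of T
    have hidx : ∀ z ∈ T, ∃ i, 1 ≤ i ∧ i ≤ ℓ₀ ∧ a i = z := by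
      intro z hz
      have hzI : z ∈ I := by
        rcases Finset.mem_union.mp hz with h | h
        · exact hX h
        · exact hY h
      rw [hI] at hzI
      obtain ⟨i, hi, rfl⟩ := Finset.mem_image.mp hzI
      obtain ⟨hi1, hin⟩ := Finset.mem_Icc.mp hi
      refine ⟨i, hi1, ?_, rfl⟩
      by_contra hcon
      push_neg at hcon
      have := hsorted ℓ₀ i hℓ₀1 hcon hin
      rw [hMa] at this
      exact absurd (T.le_max' _ hz) (not_le.mpr this)
    -- ℓ₀ ≥ 2
    have hℓ₀2 : 2 ≤ ℓ₀ := by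
      obtain ⟨x, hx⟩ := hXne
      obtain ⟨y, hy⟩ := hYne
      have hxy : x ≠ y := fun h => (Finset.disjoint_left.mp hD hx) (h ▸ hy)
      have : ∃ z ∈ T, z ≠ M := by
        by_cases hxM : x = M
        · exact ⟨y, Finset.mem_union_right _ hy, fun h => hxy (hxM.trans h.symm)⟩
        · exact ⟨x, Finset.mem_union_left _ hx, hxM⟩
      obtain ⟨z, hzT, hzM⟩ := this
      obtain ⟨i, hi1, hiℓ, hiz⟩ := hidx z hzT
      have hilt : i < ℓ₀ := lt_of_le_of_ne hiℓ (fun h => hzM (by rw [← hiz, h, hMa]))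
      omega
    have hℓ₀mem : ℓ₀ ∈ Finset.Icc 2 n := Finset.mem_Icc.mpr ⟨hℓ₀2, hℓ₀n⟩
    -- sInf S ∈ SL ℓ₀
    have hprefX : X ⊆ (Finset.Icc 1 ℓ₀).image a := by
      intro z hz
      obtain ⟨i, hi1, hiℓ, hiz⟩ := hidx z (Finset.mem_union_left _ hz)
      exact Finset.mem_image.mpr ⟨i, Finset.mem_Icc.mpr ⟨hi1, hiℓ⟩, hiz⟩
    have hprefY : Y ⊆ (Finset.Icc 1 ℓ₀).image a := by
      intro z hz
      obtain ⟨i, hi1, hiℓ, hiz⟩ := hidx z (Finset.mem_union_right _ hz)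
      exact Finset.mem_image.mpr ⟨i, Finset.mem_Icc.mpr ⟨hi1, hiℓ⟩, hiz⟩
    have hmemSL : sInf S ∈ SL ℓ₀ := by
      refine ⟨X, Y, hprefX, hprefY, hD, hXne, hYne, ⟨M, hMT, ?_⟩, hrat⟩
      intro x hx
      obtain ⟨i, hi, rfl⟩ := Finset.mem_image.mp hx
      obtain ⟨hi1, hiℓ⟩ := Finset.mem_Icc.mp hi
      rw [← hMa]
      exact hmono i ℓ₀ hi1 hiℓ hℓ₀n
    have hSLbdd : BddBelow (SL ℓ₀) := hSbdd.mono (hSLsub ℓ₀ hℓ₀mem)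
    calc (Finset.Icc 2 n).inf' (Finset.nonempty_Icc.mpr hn)
          (fun ℓ => OPTL ((Finset.Icc 1 ℓ).image a))
        ≤ OPTL ((Finset.Icc 1 ℓ₀).image a) := Finset.inf'_le _ hℓ₀mem
      _ ≤ sInf S := by rw [hOPTL]; exact csInf_le hSLbdd hmemSL
      _ = OPT I := hOPT.symm
end

section
/- For x ≥ 1 let L(x) denote the smallest positive integer with 2^{L(x)} > L(x)·x + 1. Let I be a finite set of positive reals of size n ≥ 2, listed in sorted order I[1] ≤ … ≤ I[n], and write I[i..j] := {I[max(i,1)], …, I[min(j,n)]}. Then for every ε ∈ (0,1): OPT(I) ≤ min over 2 ≤ ℓ ≤ n of OPT_L(I[ℓ − L(4/ε)² .. ℓ]) ≤ (1+ε) · OPT(I). -/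
/-- `L(x)`: the smallest positive integer `L` with `2^L > L·x + 1`. -/
noncomputable def LL (x : ℝ) : ℕ :=
  sInf {L : ℕ | 0 < L ∧ (2 : ℝ) ^ L > L * x + 1}

/-!
Let `L = L(4/ε)`, so that `4L < ε (2^L - 1)`. If some `L` consecutive elements lie within a factor
`2` of each other, then by pigeonhole two distinct sets of them have sums closer than `ε/2` times
the smallest element; their two differences form a pair of ratio at most `1 + ε`, and this pair
lies in the window of length `L² ≥ L` ending at its largest element.

Otherwise the sequence doubles every `L - 1` steps. Let `a ℓ` be the largest element of an
optimal pair and `a lo` the bottom of the window ending at `ℓ`. Everything below `a lo` weighs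
at most `2L a lo`, while `a (ℓ - 1) ≥ 2^L a lo`. If on both sides the part below the window is at
most an `ε`-fraction of the part inside it, cutting it off costs a factor `1 + ε`. Otherwise the
lighter side weighs less than `a (ℓ - 1)`, while the heavier one weighs at least `a ℓ`, so the
pair `{a ℓ}, {a (ℓ - 1)}` in the window is at least as good as the optimum.
-/

open Finset

section Ratio

variable {I X Y : Finset ℝ}

lemma one_le_ratio (hX : 0 < X.sum id) (hY : 0 < Y.sum id) : 1 ≤ ratio X Y := by
  rcases le_total (X.sum id) (Y.sum id) with h | h
  · exact le_max_of_le_right ((one_le_div hX).mpr h)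
  · exact le_max_of_le_left ((one_le_div hY).mpr h)

lemma div_le_one_add_mul_div_add {ε u s v t : ℝ} (hε : 0 ≤ ε) (hu : 0 ≤ u) (hs : 0 ≤ s)
    (hv : 0 < v) (ht : 0 ≤ t) (htv : t ≤ ε * v) : u / v ≤ (1 + ε) * ((u + s) / (v + t)) := by
  rw [mul_div_assoc', div_le_div_iff₀ hv (by positivity)]
  nlinarith [mul_le_mul_of_nonneg_left htv hu, mul_nonneg (mul_nonneg hε hs) hv.le]

lemma ratio_filter_le {p : ℝ → Prop} [DecidablePred p] {ε : ℝ} (hε : 0 ≤ ε)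
    (hXnn : ∀ x ∈ X, 0 ≤ x) (hYnn : ∀ y ∈ Y, 0 ≤ y)
    (hX : 0 < (X.filter p).sum id) (hY : 0 < (Y.filter p).sum id)
    (hXt : (X.filter (¬ p ·)).sum id ≤ ε * (X.filter p).sum id)
    (hYt : (Y.filter (¬ p ·)).sum id ≤ ε * (Y.filter p).sum id) :
    ratio (X.filter p) (Y.filter p) ≤ (1 + ε) * ratio X Y := by
  have hnn : ∀ Z : Finset ℝ, (∀ z ∈ Z, 0 ≤ z) → ∀ q : ℝ → Prop, [DecidablePred q] →
      0 ≤ (Z.filter q).sum id := fun Z hZ q _ => sum_nonneg fun z hz => hZ z (mem_filter.1 hz).1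
  unfold ratio
  rw [← sum_filter_add_sum_filter_not X p, ← sum_filter_add_sum_filter_not Y p]
  refine max_le ?_ ?_
  · exact (div_le_one_add_mul_div_add hε hX.le (hnn X hXnn _) hY (hnn Y hYnn _) hYt).trans
      (mul_le_mul_of_nonneg_left (le_max_left _ _) (by linarith))
  · exact (div_le_one_add_mul_div_add hε hY.le (hnn Y hYnn _) hX (hnn X hXnn _) hXt).trans
      (mul_le_mul_of_nonneg_left (le_max_right _ _) (by linarith))

lemma ratio_singleton_le {b c : ℝ} (hb : 0 < b) (hbc : b ≤ c) (hX : 0 < X.sum id)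
    (hY : 0 < Y.sum id) (hc : c ≤ max (X.sum id) (Y.sum id))
    (hb' : min (X.sum id) (Y.sum id) ≤ b) : ratio {c} {b} ≤ ratio X Y := by
  have hcb : max (c / b) (b / c) = c / b :=
    max_eq_left (((div_le_one (hb.trans_le hbc)).2 hbc).trans ((one_le_div hb).2 hbc))
  simp only [ratio, sum_singleton, id, hcb]
  rcases le_total (X.sum id) (Y.sum id) with h | h
  · rw [max_eq_right h] at hc
    rw [min_eq_left h] at hb'
    exact (div_le_div₀ hY.le hc hX hb').trans (le_max_right _ _)
  · rw [max_eq_left h] at hc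
    rw [min_eq_right h] at hb'
    exact (div_le_div₀ hX.le hc hY hb').trans (le_max_left _ _)

noncomputable def ratios (I : Finset ℝ) : Finset ℝ :=
  (I.powerset ×ˢ I.powerset).image fun p => ratio p.1 p.2

lemma ratio_mem_ratios (hX : X ⊆ I) (hY : Y ⊆ I) : ratio X Y ∈ ratios I :=
  mem_image.2 ⟨(X, Y), mem_product.2 ⟨mem_powerset.2 hX, mem_powerset.2 hY⟩, rfl⟩

lemma OPT_le_ratio (hX : X ⊆ I) (hY : Y ⊆ I) (hXY : Disjoint X Y) (hXn : X.Nonempty)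
    (hYn : Y.Nonempty) : OPT I ≤ ratio X Y :=
  csInf_le ((ratios I).bddBelow.mono <| by
      rintro _ ⟨X, Y, hX, hY, -, -, -, rfl⟩
      exact ratio_mem_ratios hX hY)
    ⟨X, Y, hX, hY, hXY, hXn, hYn, rfl⟩

lemma OPTL_le_ratio (hX : X ⊆ I) (hY : Y ⊆ I) (hXY : Disjoint X Y) (hXn : X.Nonempty)
    (hYn : Y.Nonempty) {m : ℝ} (hm : m ∈ X ∪ Y) (hmax : ∀ x ∈ I, x ≤ m) :
    OPTL I ≤ ratio X Y :=
  csInf_le ((ratios I).bddBelow.mono <| by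
      rintro _ ⟨X, Y, hX, hY, -, -, -, -, rfl⟩
      exact ratio_mem_ratios hX hY)
    ⟨X, Y, hX, hY, hXY, hXn, hYn, ⟨m, hm, hmax⟩, rfl⟩

lemma exists_ratio_eq_OPT (hI : 1 < #I) : ∃ X Y : Finset ℝ, X ⊆ I ∧ Y ⊆ I ∧ Disjoint X Y ∧
    X.Nonempty ∧ Y.Nonempty ∧ OPT I = ratio X Y := by
  obtain ⟨x, hx, y, hy, hxy⟩ := one_lt_card.1 hI
  have hmem : OPT I ∈ {r | ∃ X Y : Finset ℝ, X ⊆ I ∧ Y ⊆ I ∧ Disjoint X Y ∧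
      X.Nonempty ∧ Y.Nonempty ∧ r = ratio X Y} := by
    refine Set.Nonempty.csInf_mem ⟨_, {x}, {y}, singleton_subset_iff.2 hx,
      singleton_subset_iff.2 hy, disjoint_singleton.2 hxy, singleton_nonempty x,
      singleton_nonempty y, rfl⟩ ((ratios I).finite_toSet.subset ?_)
    rintro _ ⟨X, Y, hX, hY, -, -, -, rfl⟩
    exact ratio_mem_ratios hX hY
  exact hmem

lemma OPT_le_OPTL {J : Finset ℝ} (hJI : J ⊆ I) (hJ : 1 < #J) : OPT I ≤ OPTL J := by
  have hJn : J.Nonempty := card_pos.1 (by omega)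
  obtain ⟨y, hy⟩ : (J.erase (J.max' hJn)).Nonempty :=
    card_pos.1 (by rw [card_erase_of_mem (J.max'_mem hJn)]; omega)
  refine csInf_le_csInf ((ratios I).bddBelow.mono ?_) ?_ ?_
  · rintro _ ⟨X, Y, hX, hY, -, -, -, rfl⟩
    exact ratio_mem_ratios hX hY
  · exact ⟨_, {J.max' hJn}, {y}, singleton_subset_iff.2 (J.max'_mem hJn),
      singleton_subset_iff.2 (mem_of_mem_erase hy), disjoint_singleton.2 (ne_of_mem_erase hy).symm,
      singleton_nonempty _, singleton_nonempty _,
      ⟨_, mem_union_left _ (mem_singleton_self _), fun x hx => J.le_max' x hx⟩, rfl⟩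
  · rintro _ ⟨X, Y, hX, hY, hXY, hXn, hYn, -, rfl⟩
    exact ⟨X, Y, hX.trans hJI, hY.trans hJI, hXY, hXn, hYn, rfl⟩

end Ratio

lemma exists_ne_subsets_abs_sum_sub_lt {α : Type*} (B : Finset α) (f : α → ℝ)
    (hf : ∀ i ∈ B, 0 ≤ f i) {w : ℝ} (hw : 0 < w) (hB : ∑ i ∈ B, f i < w * (2 ^ #B - 1)) :
    ∃ S₁ ⊆ B, ∃ S₂ ⊆ B, S₁ ≠ S₂ ∧ |∑ i ∈ S₁, f i - ∑ i ∈ S₂, f i| < w := by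
  have hnn : ∀ S ∈ B.powerset, 0 ≤ (∑ i ∈ S, f i) / w := fun S hS =>
    div_nonneg (sum_nonneg fun i hi => hf i (mem_powerset.1 hS hi)) hw.le
  -- `2 ^ #B` subsets, but only `2 ^ #B - 1` possible values of `⌊(∑ i ∈ S, f i) / w⌋₊`
  have hmaps : ∀ S ∈ B.powerset, ⌊(∑ i ∈ S, f i) / w⌋₊ ∈ range (2 ^ #B - 1) := by
    intro S hS
    rw [mem_range, Nat.floor_lt (hnn S hS), div_lt_iff₀ hw, Nat.cast_sub Nat.one_le_two_pow]
    push_cast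
    refine lt_of_le_of_lt (sum_le_sum_of_subset_of_nonneg (mem_powerset.1 hS)
      fun i hi _ => hf i hi) (by linarith)
  obtain ⟨S₁, hS₁, S₂, hS₂, hne, heq⟩ := exists_ne_map_eq_of_card_lt_of_maps_to
    (by rw [card_range, card_powerset]; exact Nat.sub_lt (Nat.two_pow_pos _) one_pos) hmaps
  refine ⟨S₁, mem_powerset.1 hS₁, S₂, mem_powerset.1 hS₂, hne, ?_⟩
  have h := Int.abs_sub_lt_one_of_floor_eq_floor (a := (∑ i ∈ S₁, f i) / w)
    (b := (∑ i ∈ S₂, f i) / w) (by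
    rw [← Int.natCast_floor_eq_floor (hnn S₁ hS₁), ← Int.natCast_floor_eq_floor (hnn S₂ hS₂), heq])
  rwa [← sub_div, abs_div, abs_of_pos hw, div_lt_one hw] at h

lemma exists_disjoint_ratio_le_one_add {B : Finset ℝ} {m ε : ℝ} (hm : 0 < m)
    (hB : ∀ x ∈ B, m ≤ x ∧ x ≤ 2 * m) (hε : 0 < ε) (hε2 : ε < 2)
    (hcard : 4 * #B < ε * (2 ^ #B - 1)) :
    ∃ X ⊆ B, ∃ Y ⊆ B, Disjoint X Y ∧ X.Nonempty ∧ Y.Nonempty ∧ ratio X Y ≤ 1 + ε := by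
  have hsum : B.sum id < ε * m / 2 * (2 ^ #B - 1) := by
    have := sum_le_card_nsmul B id (2 * m) fun x hx => (hB x hx).2
    rw [nsmul_eq_mul] at this
    nlinarith
  obtain ⟨S₁, hS₁, S₂, hS₂, hne, hclose⟩ := exists_ne_subsets_abs_sum_sub_lt B id
    (fun x hx => hm.le.trans (hB x hx).1) (by positivity) hsum
  rw [← sum_sdiff_sub_sum_sdiff] at hclose
  have hlarge : ∀ Z ⊆ B, Z.Nonempty → m ≤ Z.sum id := fun Z hZ ⟨z, hz⟩ =>
    (hB z (hZ hz)).1.trans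
      (single_le_sum (f := id) (fun x hx => hm.le.trans (hB x (hZ hx)).1) hz)
  have hX : (S₁ \ S₂).Nonempty := by
    by_contra h
    have hY : (S₂ \ S₁).Nonempty := by
      rw [not_nonempty_iff_eq_empty, sdiff_eq_empty_iff_subset] at h
      exact sdiff_nonempty.2 fun h' => hne (h.antisymm h')
    rw [not_nonempty_iff_eq_empty.1 h, sum_empty, zero_sub, abs_neg,
      abs_of_nonneg (hm.le.trans (hlarge _ (sdiff_subset.trans hS₂) hY))] at hclose
    nlinarith [hlarge _ (sdiff_subset.trans hS₂) hY]
  have hY : (S₂ \ S₁).Nonempty := by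
    by_contra h
    rw [not_nonempty_iff_eq_empty.1 h, sum_empty, sub_zero,
      abs_of_nonneg (hm.le.trans (hlarge _ (sdiff_subset.trans hS₁) hX))] at hclose
    nlinarith [hlarge _ (sdiff_subset.trans hS₁) hX]
  have hmX := hlarge _ (sdiff_subset.trans hS₁) hX
  have hmY := hlarge _ (sdiff_subset.trans hS₂) hY
  rw [abs_lt] at hclose
  refine ⟨_, sdiff_subset.trans hS₁, _, sdiff_subset.trans hS₂, disjoint_sdiff_sdiff, hX, hY,
    max_le ?_ ?_⟩
  · rw [div_le_iff₀ (hm.trans_le hmY)]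
    nlinarith
  · rw [div_le_iff₀ (hm.trans_le hmX)]
    nlinarith

lemma LL_spec (x : ℝ) : 0 < LL x ∧ LL x * x + 1 < 2 ^ LL x := by
  refine Nat.sInf_mem (s := {L : ℕ | 0 < L ∧ (2 : ℝ) ^ L > L * x + 1}) ?_
  -- `L = 2k` with `k ≥ 2x` works: `2 ^ (2k) ≥ (k + 1) ^ 2 > 2kx + 1`
  set k := ⌈2 * x⌉₊ + 1
  have hk : 2 * x ≤ k := by
    simp only [k, Nat.cast_add, Nat.cast_one]
    linarith [Nat.le_ceil (2 * x)]
  have hpow : (k : ℝ) + 1 ≤ 2 ^ k := by exact_mod_cast Nat.lt_two_pow_self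
  refine ⟨2 * k, by positivity, ?_⟩
  rw [pow_mul', Nat.cast_mul, Nat.cast_two]
  have hk0 : (0 : ℝ) < k := by positivity
  nlinarith [pow_le_pow_left₀ (by positivity) hpow 2, mul_le_mul_of_nonneg_left hk hk0.le]

lemma LL_four_div_spec {ε : ℝ} (hε : ε ∈ Set.Ioo (0 : ℝ) 1) :
    2 ≤ LL (4 / ε) ∧ 4 * (LL (4 / ε) : ℝ) < ε * (2 ^ LL (4 / ε) - 1) := by
  obtain ⟨hε0, hε1⟩ := hε
  obtain ⟨hpos, hlt⟩ := LL_spec (4 / ε)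
  have key : 4 * (LL (4 / ε) : ℝ) < ε * (2 ^ LL (4 / ε) - 1) := by
    have := mul_lt_mul_of_pos_left hlt hε0
    rw [mul_add, mul_one, ← mul_assoc, mul_comm ε, mul_assoc, mul_div_cancel₀ _ hε0.ne'] at this
    linarith
  refine ⟨?_, key⟩
  by_contra h
  have h1 : LL (4 / ε) = 1 := by omega
  rw [h1] at key
  norm_num at key
  linarith

section Sorted

variable {n : ℕ} {a : ℕ → ℝ}

lemma pos_of_mem_image_Icc (hpos : ∀ i ∈ Icc 1 n, 0 < a i) {x : ℝ}
    (hx : x ∈ (Icc 1 n).image a) : 0 < x := by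
  obtain ⟨i, hi, rfl⟩ := mem_image.1 hx
  exact hpos i hi

lemma one_lt_card_image_Icc (ha : StrictMonoOn a (Set.Icc 1 n)) {lo hi : ℕ} (hlo : 1 ≤ lo)
    (hlohi : lo < hi) (hhi : hi ≤ n) : 1 < #((Icc lo hi).image a) :=
  one_lt_card.2 ⟨a lo, mem_image_of_mem a (mem_Icc.2 ⟨le_rfl, hlohi.le⟩), a hi,
    mem_image_of_mem a (mem_Icc.2 ⟨hlohi.le, le_rfl⟩),
    (ha ⟨hlo, by omega⟩ ⟨by omega, hhi⟩ hlohi).ne⟩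

lemma mem_image_Icc_of_le (ha : StrictMonoOn a (Set.Icc 1 n)) {lo hi : ℕ} (hlo : 1 ≤ lo)
    (hlohi : lo ≤ hi) (hhi : hi ≤ n) {x : ℝ} (hx : x ∈ (Icc 1 n).image a) (h₁ : a lo ≤ x)
    (h₂ : x ≤ a hi) : x ∈ (Icc lo hi).image a := by
  obtain ⟨i, hi, rfl⟩ := mem_image.1 hx
  rw [mem_Icc] at hi
  refine mem_image_of_mem a (mem_Icc.2 ⟨?_, ?_⟩)
  · exact (ha.le_iff_le ⟨hlo, by omega⟩ hi).1 h₁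
  · exact (ha.le_iff_le hi ⟨by omega, hhi⟩).1 h₂

lemma filter_not_le_subset_image_Ico (ha : StrictMonoOn a (Set.Icc 1 n)) {lo : ℕ} (hlo : 1 ≤ lo)
    (hlon : lo ≤ n) {Z : Finset ℝ} (hZ : Z ⊆ (Icc 1 n).image a) :
    Z.filter (¬ a lo ≤ ·) ⊆ (Ico 1 lo).image a := by
  intro x hx
  obtain ⟨hxZ, hxlo⟩ := mem_filter.1 hx
  obtain ⟨i, hi, rfl⟩ := mem_image.1 (hZ hxZ)
  rw [mem_Icc] at hi
  exact mem_image_of_mem a (mem_Ico.2 ⟨hi.1, (ha.lt_iff_lt hi ⟨hlo, hlon⟩).1 (not_le.1 hxlo)⟩)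

lemma OPTL_image_Icc_le_ratio (ha : StrictMonoOn a (Set.Icc 1 n)) {lo ℓ : ℕ} (hlo : 1 ≤ lo)
    (hloℓ : lo ≤ ℓ) (hℓ : ℓ ≤ n) {X Y : Finset ℝ} (hX : X ⊆ (Icc 1 n).image a)
    (hY : Y ⊆ (Icc 1 n).image a) (hXY : Disjoint X Y) (hXn : X.Nonempty) (hYn : Y.Nonempty)
    (htop : a ℓ ∈ X ∪ Y) (hbounds : ∀ x ∈ X ∪ Y, a lo ≤ x ∧ x ≤ a ℓ) :
    OPTL ((Icc lo ℓ).image a) ≤ ratio X Y := by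
  have hsub : ∀ Z ⊆ (Icc 1 n).image a, Z ⊆ X ∪ Y → Z ⊆ (Icc lo ℓ).image a :=
    fun Z hZ hZXY x hx => mem_image_Icc_of_le ha hlo hloℓ hℓ (hZ hx) (hbounds x (hZXY hx)).1
      (hbounds x (hZXY hx)).2
  refine OPTL_le_ratio (hsub X hX subset_union_left) (hsub Y hY subset_union_right) hXY hXn hYn
    htop ?_
  simp only [mem_image, mem_Icc]
  rintro _ ⟨i, hi, rfl⟩
  exact ha.monotoneOn ⟨by omega, by omega⟩ ⟨by omega, hℓ⟩ hi.2

lemma OPTL_image_Icc_le_ratio_top_two (ha : StrictMonoOn a (Set.Icc 1 n)) {lo ℓ : ℕ}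
    (hlo : 1 ≤ lo) (hloℓ : lo < ℓ) (hℓ : ℓ ≤ n) :
    OPTL ((Icc lo ℓ).image a) ≤ ratio {a ℓ} {a (ℓ - 1)} := by
  have hmem : ∀ i, 1 ≤ i → i ≤ n → a i ∈ (Icc 1 n).image a := fun i h₁ h₂ =>
    mem_image_of_mem a (mem_Icc.2 ⟨h₁, h₂⟩)
  have hmono : ∀ i, lo ≤ i → i ≤ ℓ → a lo ≤ a i ∧ a i ≤ a ℓ := fun i h₁ h₂ =>
    ⟨ha.monotoneOn ⟨hlo, by omega⟩ ⟨by omega, by omega⟩ h₁,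
      ha.monotoneOn ⟨by omega, by omega⟩ ⟨by omega, hℓ⟩ h₂⟩
  refine OPTL_image_Icc_le_ratio ha hlo hloℓ.le hℓ (singleton_subset_iff.2 (hmem ℓ (by omega) hℓ))
    (singleton_subset_iff.2 (hmem (ℓ - 1) (by omega) (by omega)))
    (disjoint_singleton.2 (ha ⟨by omega, by omega⟩ ⟨by omega, hℓ⟩ (by omega)).ne')
    (singleton_nonempty _) (singleton_nonempty _) (mem_union_left _ (mem_singleton_self _))
    fun x hx => ?_
  rcases mem_union.1 hx with h | h <;> rw [mem_singleton.1 h]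
  · exact hmono ℓ hloℓ.le le_rfl
  · exact hmono (ℓ - 1) (by omega) (by omega)

lemma exists_top_index (ha : StrictMonoOn a (Set.Icc 1 n)) {X Y : Finset ℝ}
    (hX : X ⊆ (Icc 1 n).image a) (hY : Y ⊆ (Icc 1 n).image a) (hXY : Disjoint X Y)
    (hXn : X.Nonempty) (hYn : Y.Nonempty) :
    ∃ ℓ ∈ Icc 2 n, a ℓ ∈ X ∪ Y ∧ ∀ x ∈ X ∪ Y, x ≤ a ℓ := by
  have hU : (X ∪ Y).Nonempty := hXn.mono subset_union_left
  obtain ⟨ℓ, hℓ, hℓmax⟩ := mem_image.1 (union_subset hX hY ((X ∪ Y).max'_mem hU))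
  rw [mem_Icc] at hℓ
  refine ⟨ℓ, mem_Icc.2 ⟨?_, hℓ.2⟩, hℓmax ▸ (X ∪ Y).max'_mem hU,
    fun x hx => hℓmax ▸ (X ∪ Y).le_max' x hx⟩
  -- otherwise `X ∪ Y ⊆ {a 1}`
  by_contra h
  have hall : ∀ x ∈ X ∪ Y, x = a 1 := by
    intro x hx
    obtain ⟨i, hi, rfl⟩ := mem_image.1 (union_subset hX hY hx)
    rw [mem_Icc] at hi
    have : i ≤ ℓ := (ha.le_iff_le hi ⟨hℓ.1, hℓ.2⟩).1 (hℓmax ▸ (X ∪ Y).le_max' _ hx)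
    rw [show i = 1 by omega]
  obtain ⟨x, hx⟩ := hXn
  obtain ⟨y, hy⟩ := hYn
  exact disjoint_left.1 hXY hx ((hall x (mem_union_left _ hx)).trans
    (hall y (mem_union_right _ hy)).symm ▸ hy)

end Sorted

section Doubling

variable {n d : ℕ} {a : ℕ → ℝ}

lemma pow_mul_le_of_doubling (hd : ∀ j, 1 ≤ j → j + d ≤ n → 2 * a j < a (j + d)) {j : ℕ}
    (hj : 1 ≤ j) (t : ℕ) (ht : j + t * d ≤ n) : 2 ^ t * a j ≤ a (j + t * d) := by
  induction t with
  | zero => simp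
  | succ t ih =>
    rw [add_one_mul, ← add_assoc] at ht ⊢
    have := hd (j + t * d) (by omega) ht
    rw [pow_succ']
    nlinarith [ih (by omega)]

lemma sum_Ico_le_of_doubling (ha : MonotoneOn a (Set.Icc 1 n)) (hpos : ∀ i ∈ Icc 1 n, 0 < a i)
    (hd1 : 1 ≤ d) (hd : ∀ j, 1 ≤ j → j + d ≤ n → 2 * a j < a (j + d)) {q : ℕ} (hq : 1 ≤ q)
    (hqn : q ≤ n) : ∑ i ∈ Ico 1 q, a i ≤ 2 * d * a q := by
  induction q using Nat.strong_induction_on with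
  | _ q ih =>
  have haq := hpos q (mem_Icc.2 ⟨hq, hqn⟩)
  have htail : ∀ lo, 1 ≤ lo → ∑ i ∈ Ico lo q, a i ≤ ((q - lo : ℕ) : ℝ) * a q := by
    intro lo hlo
    rw [← Nat.card_Ico, ← nsmul_eq_mul]
    refine sum_le_card_nsmul _ _ _ fun i hi => ?_
    rw [mem_Ico] at hi
    exact ha ⟨by omega, by omega⟩ ⟨hq, hqn⟩ hi.2.le
  by_cases hqd : q ≤ d
  · have : ((q - 1 : ℕ) : ℝ) ≤ d := by exact_mod_cast (Nat.sub_le q 1).trans hqd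
    nlinarith [htail 1 le_rfl]
  · -- the last `d` terms are each at most `a q`, the others sum to at most `2 d a (q - d) < d a q`
    rw [← sum_Ico_consecutive _ (show 1 ≤ q - d by omega) (Nat.sub_le q d)]
    have hlast := htail (q - d) (by omega)
    rw [Nat.sub_sub_self (by omega)] at hlast
    have hdouble := hd (q - d) (by omega) (by omega)
    rw [Nat.sub_add_cancel (by omega)] at hdouble
    have hd0 : (0 : ℝ) ≤ d := d.cast_nonneg
    nlinarith [ih (q - d) (by omega) (by omega) (by omega)]

lemma sum_filter_not_le_le_of_doubling (ha : StrictMonoOn a (Set.Icc 1 n))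
    (hpos : ∀ i ∈ Icc 1 n, 0 < a i) (hd1 : 1 ≤ d)
    (hd : ∀ j, 1 ≤ j → j + d ≤ n → 2 * a j < a (j + d)) {lo : ℕ} (hlo : 1 ≤ lo) (hlon : lo ≤ n)
    {Z : Finset ℝ} (hZ : Z ⊆ (Icc 1 n).image a) :
    (Z.filter (¬ a lo ≤ ·)).sum id ≤ 2 * d * a lo := by
  refine (sum_le_sum_of_subset_of_nonneg (filter_not_le_subset_image_Ico ha hlo hlon hZ)
    fun x hx _ => (pos_of_mem_image_Icc hpos (image_subset_image (Ico_subset_Icc_self.trans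
      (Icc_subset_Icc_right (by omega))) hx)).le).trans ?_
  rw [sum_image (ha.injOn.mono fun i hi => by
    rw [coe_Ico, Set.mem_Ico] at hi
    exact ⟨hi.1, by omega⟩)]
  exact sum_Ico_le_of_doubling ha.monotoneOn hpos hd1 hd hlo hlon

end Doubling

section Window

variable {n L : ℕ} {a : ℕ → ℝ} {ε : ℝ}

lemma exists_OPTL_window_le_of_dense (ha : StrictMonoOn a (Set.Icc 1 n))
    (hpos : ∀ i ∈ Icc 1 n, 0 < a i) (hε : ε ∈ Set.Ioo (0 : ℝ) 1) (hL : 2 ≤ L)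
    (hLε : 4 * (L : ℝ) < ε * (2 ^ L - 1)) {j : ℕ} (hj : 1 ≤ j) (hjn : j + (L - 1) ≤ n)
    (hdense : a (j + (L - 1)) ≤ 2 * a j) :
    ∃ ℓ ∈ Icc 2 n, OPTL ((Icc (max (ℓ - L ^ 2) 1) ℓ).image a) ≤ 1 + ε := by
  set B := (Icc j (j + (L - 1))).image a
  have hBI : B ⊆ (Icc 1 n).image a := image_subset_image (Icc_subset_Icc hj hjn)
  have hcard : #B = L := by
    rw [card_image_of_injOn (ha.injOn.mono fun i hi => ?_), Nat.card_Icc]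
    · omega
    · rw [coe_Icc, Set.mem_Icc] at hi
      exact ⟨by omega, by omega⟩
  have hB : ∀ x ∈ B, a j ≤ x ∧ x ≤ 2 * a j := by
    simp only [B, mem_image, mem_Icc]
    rintro _ ⟨i, hi, rfl⟩
    exact ⟨ha.monotoneOn ⟨hj, by omega⟩ ⟨by omega, by omega⟩ hi.1,
      (ha.monotoneOn ⟨by omega, by omega⟩ ⟨by omega, hjn⟩ hi.2).trans hdense⟩
  obtain ⟨X, hX, Y, hY, hXY, hXn, hYn, hratio⟩ :=
    exists_disjoint_ratio_le_one_add (hpos j (mem_Icc.2 ⟨hj, by omega⟩)) hB hε.1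
      (by linarith [hε.2]) (by rw [hcard]; exact hLε)
  obtain ⟨ℓ, hℓ, htop, hmax⟩ := exists_top_index ha (hX.trans hBI) (hY.trans hBI) hXY hXn hYn
  rw [mem_Icc] at hℓ
  have hℓj : ℓ ≤ j + (L - 1) := by
    obtain ⟨i, hi, hiℓ⟩ := mem_image.1 (union_subset hX hY htop)
    rw [mem_Icc] at hi
    rw [← ha.injOn ⟨by omega, by omega⟩ ⟨by omega, hℓ.2⟩ hiℓ]
    exact hi.2
  have hloj : max (ℓ - L ^ 2) 1 ≤ j := max_le (by have := Nat.le_self_pow two_ne_zero L; omega) hj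
  refine ⟨ℓ, mem_Icc.2 hℓ, le_trans ?_ hratio⟩
  refine OPTL_image_Icc_le_ratio ha (le_max_right _ _) (max_le (Nat.sub_le _ _) (by omega)) hℓ.2
    (hX.trans hBI) (hY.trans hBI) hXY hXn hYn htop fun x hx => ⟨?_, hmax x hx⟩
  exact (ha.monotoneOn ⟨le_max_right _ _, by omega⟩ ⟨hj, by omega⟩ hloj).trans
    (hB x (union_subset hX hY hx)).1

/-- Below the window everything weighs at most `2 (L - 1) a lo`, while `a (ℓ - 1) ≥ 2 ^ L a lo`. -/
lemma sum_lt_of_heavy_tail (ha : StrictMonoOn a (Set.Icc 1 n)) (hpos : ∀ i ∈ Icc 1 n, 0 < a i)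
    (hε : ε ∈ Set.Ioo (0 : ℝ) 1) (hL : 2 ≤ L) (hLε : 4 * (L : ℝ) < ε * (2 ^ L - 1))
    (hd : ∀ j, 1 ≤ j → j + (L - 1) ≤ n → 2 * a j < a (j + (L - 1))) {ℓ : ℕ} (hℓ : ℓ ∈ Icc 2 n)
    {Z : Finset ℝ} (hZ : Z ⊆ (Icc 1 n).image a)
    (hheavy : ε * (Z.filter (a (max (ℓ - L ^ 2) 1) ≤ ·)).sum id <
      (Z.filter (¬ a (max (ℓ - L ^ 2) 1) ≤ ·)).sum id) :
    Z.sum id < a (ℓ - 1) := by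
  obtain ⟨hε0, hε1⟩ := hε
  rw [mem_Icc] at hℓ
  set lo := max (ℓ - L ^ 2) 1
  set T := Z.filter (¬ a lo ≤ ·)
  have hlo : 1 ≤ lo ∧ lo ≤ ℓ := ⟨le_max_right _ _, max_le (Nat.sub_le _ _) (by omega)⟩
  have hnn : ∀ z ∈ Z, 0 ≤ z := fun z hz => (pos_of_mem_image_Icc hpos (hZ hz)).le
  have hT0 : 0 < T.sum id := (mul_nonneg hε0.le (sum_nonneg fun z hz =>
    hnn z (mem_filter.1 hz).1)).trans_lt hheavy
  have hlo2 : 2 ≤ lo := by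
    obtain ⟨x, hx⟩ := nonempty_of_sum_ne_zero hT0.ne'
    obtain ⟨i, hi, -⟩ := mem_image.1 (filter_not_le_subset_image_Ico ha hlo.1 (by omega) hZ hx)
    rw [mem_Ico] at hi
    omega
  have hLL : L * (L - 1) + 1 ≤ L ^ 2 := by
    rw [Nat.mul_sub_one, sq]
    have := Nat.le_mul_self L
    omega
  have hT : T.sum id ≤ 2 * ((L - 1 : ℕ) : ℝ) * a lo :=
    sum_filter_not_le_le_of_doubling ha hpos (by omega) hd hlo.1 (by omega) hZ
  have hgrow : 2 ^ L * a lo ≤ a (ℓ - 1) :=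
    (pow_mul_le_of_doubling hd hlo.1 L (by omega)).trans
      (ha.monotoneOn ⟨by omega, by omega⟩ ⟨by omega, by omega⟩ (by omega))
  have hsplit := sum_filter_add_sum_filter_not Z (a lo ≤ ·) id
  have hL1 : ((L - 1 : ℕ) : ℝ) ≤ L := by exact_mod_cast Nat.sub_le L 1
  have halo := hpos lo (mem_Icc.2 ⟨hlo.1, by omega⟩)
  -- multiplied by `ε`: `ε Σ Z < 2 Σ T ≤ 4 L a lo < ε (2 ^ L - 1) a lo < ε a (ℓ - 1)`
  refine lt_of_mul_lt_mul_left ?_ hε0.le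
  nlinarith [mul_lt_mul_of_pos_right hLε halo]

lemma OPTL_image_Icc_le_of_light_tails (ha : StrictMonoOn a (Set.Icc 1 n))
    (hpos : ∀ i ∈ Icc 1 n, 0 < a i) (hε : 0 ≤ ε) {lo ℓ : ℕ} (hlo : 1 ≤ lo) (hloℓ : lo ≤ ℓ)
    (hℓ : ℓ ≤ n) {X Y : Finset ℝ} (hX : X ⊆ (Icc 1 n).image a) (hY : Y ⊆ (Icc 1 n).image a)
    (hXY : Disjoint X Y) (hXn : X.Nonempty) (hYn : Y.Nonempty) (htop : a ℓ ∈ X ∪ Y)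
    (hmax : ∀ x ∈ X ∪ Y, x ≤ a ℓ)
    (hXl : (X.filter (¬ a lo ≤ ·)).sum id ≤ ε * (X.filter (a lo ≤ ·)).sum id)
    (hYl : (Y.filter (¬ a lo ≤ ·)).sum id ≤ ε * (Y.filter (a lo ≤ ·)).sum id) :
    OPTL ((Icc lo ℓ).image a) ≤ (1 + ε) * ratio X Y := by
  have hnn : ∀ Z ⊆ (Icc 1 n).image a, ∀ z ∈ Z, 0 ≤ z := fun Z hZ z hz =>
    (pos_of_mem_image_Icc hpos (hZ hz)).le
  have hkept : ∀ Z ⊆ (Icc 1 n).image a, Z.Nonempty →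
      (Z.filter (¬ a lo ≤ ·)).sum id ≤ ε * (Z.filter (a lo ≤ ·)).sum id →
      0 < (Z.filter (a lo ≤ ·)).sum id := fun Z hZ hZn hZl => by
    have hsplit := sum_filter_add_sum_filter_not Z (a lo ≤ ·) id
    have hZ0 : 0 < Z.sum id := sum_pos (fun z hz => pos_of_mem_image_Icc hpos (hZ hz)) hZn
    exact pos_of_mul_pos_right (a := 1 + ε) (by linarith) (by linarith)
  have hX' := hkept X hX hXn hXl
  have hY' := hkept Y hY hYn hYl
  refine le_trans ?_ (ratio_filter_le hε (hnn X hX) (hnn Y hY) hX' hY' hXl hYl)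
  refine OPTL_image_Icc_le_ratio ha hlo hloℓ hℓ ((filter_subset _ _).trans hX)
    ((filter_subset _ _).trans hY) (hXY.mono (filter_subset _ _) (filter_subset _ _))
    (nonempty_of_sum_ne_zero hX'.ne') (nonempty_of_sum_ne_zero hY'.ne') ?_ fun x hx => ?_
  · rw [← filter_union, mem_filter]
    exact ⟨htop, ha.monotoneOn ⟨hlo, by omega⟩ ⟨by omega, hℓ⟩ hloℓ⟩
  · rw [← filter_union, mem_filter] at hx
    exact ⟨hx.2, hmax x hx.1⟩

lemma OPTL_window_le_of_doubling (ha : StrictMonoOn a (Set.Icc 1 n))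
    (hpos : ∀ i ∈ Icc 1 n, 0 < a i) (hε : ε ∈ Set.Ioo (0 : ℝ) 1) (hL : 2 ≤ L)
    (hLε : 4 * (L : ℝ) < ε * (2 ^ L - 1))
    (hd : ∀ j, 1 ≤ j → j + (L - 1) ≤ n → 2 * a j < a (j + (L - 1))) {X Y : Finset ℝ}
    (hX : X ⊆ (Icc 1 n).image a) (hY : Y ⊆ (Icc 1 n).image a) (hXY : Disjoint X Y)
    (hXn : X.Nonempty) (hYn : Y.Nonempty) {ℓ : ℕ} (hℓ : ℓ ∈ Icc 2 n) (htop : a ℓ ∈ X ∪ Y)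
    (hmax : ∀ x ∈ X ∪ Y, x ≤ a ℓ) :
    OPTL ((Icc (max (ℓ - L ^ 2) 1) ℓ).image a) ≤ (1 + ε) * ratio X Y := by
  set lo := max (ℓ - L ^ 2) 1
  have hℓ' := mem_Icc.1 hℓ
  have hlo : 1 ≤ lo ∧ lo ≤ ℓ - 1 :=
    ⟨le_max_right _ _, max_le (by have := Nat.one_le_pow 2 L (by omega); omega) (by omega)⟩
  have hnn : ∀ Z ⊆ (Icc 1 n).image a, ∀ z ∈ Z, 0 ≤ z := fun Z hZ z hz =>
    (pos_of_mem_image_Icc hpos (hZ hz)).le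
  have hsum : ∀ Z ⊆ (Icc 1 n).image a, Z.Nonempty → 0 < Z.sum id := fun Z hZ hZn =>
    sum_pos (fun z hz => pos_of_mem_image_Icc hpos (hZ hz)) hZn
  have hratio := one_le_ratio (hsum X hX hXn) (hsum Y hY hYn)
  by_cases hlight : (X.filter (¬ a lo ≤ ·)).sum id ≤ ε * (X.filter (a lo ≤ ·)).sum id ∧
      (Y.filter (¬ a lo ≤ ·)).sum id ≤ ε * (Y.filter (a lo ≤ ·)).sum id
  · exact OPTL_image_Icc_le_of_light_tails ha hpos hε.1.le hlo.1 (by omega) hℓ'.2 hX hY hXY hXn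
      hYn htop hmax hlight.1 hlight.2
  · -- the smaller side is lighter than `a (ℓ - 1)`, so the top two elements do better
    have hsmall : min (X.sum id) (Y.sum id) < a (ℓ - 1) := by
      rcases not_and_or.1 hlight with h | h
      · exact (min_le_left _ _).trans_lt
          (sum_lt_of_heavy_tail ha hpos hε hL hLε hd hℓ hX (not_le.1 h))
      · exact (min_le_right _ _).trans_lt
          (sum_lt_of_heavy_tail ha hpos hε hL hLε hd hℓ hY (not_le.1 h))
    have htop2 : a (ℓ - 1) < a ℓ := ha ⟨by omega, by omega⟩ ⟨by omega, hℓ'.2⟩ (by omega)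
    have hsingle : a ℓ ≤ max (X.sum id) (Y.sum id) := by
      rcases mem_union.1 htop with h | h
      · exact (single_le_sum (f := id) (hnn X hX) h).trans (le_max_left _ _)
      · exact (single_le_sum (f := id) (hnn Y hY) h).trans (le_max_right _ _)
    calc OPTL ((Icc lo ℓ).image a) ≤ ratio {a ℓ} {a (ℓ - 1)} :=
          OPTL_image_Icc_le_ratio_top_two ha hlo.1 (by omega) hℓ'.2
      _ ≤ ratio X Y := ratio_singleton_le (hpos _ (mem_Icc.2 ⟨by omega, by omega⟩)) htop2.le
          (hsum X hX hXn) (hsum Y hY hYn) hsingle hsmall.le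
      _ ≤ (1 + ε) * ratio X Y := le_mul_of_one_le_left (by linarith) (by linarith [hε.1])

end Window

/-- **Lemma 3.2 (Reduction).** For a sorted set `I = {a 1 < … < a n}` of positive reals and
`ε ∈ (0,1)`:
`OPT(I) ≤ min_{2 ≤ ℓ ≤ n} OPT_L(I[ℓ − L(4/ε)² .. ℓ]) ≤ (1+ε)·OPT(I)`. -/
theorem reduction_lemma (ε : ℝ) (hε : ε ∈ Set.Ioo (0 : ℝ) 1)
    (n : ℕ) (hn : 2 ≤ n) (a : ℕ → ℝ)
    (hpos : ∀ i ∈ Finset.Icc 1 n, 0 < a i)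
    (hsorted : ∀ i j, 1 ≤ i → i < j → j ≤ n → a i < a j)
    (I : Finset ℝ) (hI : I = (Finset.Icc 1 n).image a) :
    OPT I ≤ (Finset.Icc 2 n).inf' (Finset.nonempty_Icc.mpr hn)
        (fun ℓ => OPTL ((Finset.Icc (max (ℓ - (LL (4 / ε)) ^ 2) 1) ℓ).image a)) ∧
    (Finset.Icc 2 n).inf' (Finset.nonempty_Icc.mpr hn)
        (fun ℓ => OPTL ((Finset.Icc (max (ℓ - (LL (4 / ε)) ^ 2) 1) ℓ).image a))
      ≤ (1 + ε) * OPT I := by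
  subst hI
  have ha : StrictMonoOn a (Set.Icc 1 n) := fun i hi j hj hij => hsorted i j hi.1 hij hj.2
  obtain ⟨hL, hLε⟩ := LL_four_div_spec hε
  set L := LL (4 / ε)
  refine ⟨le_inf' _ _ fun ℓ hℓ => ?_, ?_⟩
  · rw [mem_Icc] at hℓ
    have := Nat.one_le_pow 2 L (by omega)
    exact OPT_le_OPTL (image_subset_image (Icc_subset_Icc (le_max_right _ _) hℓ.2))
      (one_lt_card_image_Icc ha (le_max_right _ _) (max_lt (by omega) (by omega)) hℓ.2)
  obtain ⟨X, Y, hX, hY, hXY, hXn, hYn, hopt⟩ :=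
    exists_ratio_eq_OPT (one_lt_card_image_Icc ha le_rfl (by omega : 1 < n) le_rfl)
  obtain ⟨ℓ, hℓ, htop, hmax⟩ := exists_top_index ha hX hY hXY hXn hYn
  rw [hopt]
  by_cases hdense : ∃ j, 1 ≤ j ∧ j + (L - 1) ≤ n ∧ a (j + (L - 1)) ≤ 2 * a j
  · obtain ⟨j, hj, hjn, hj2⟩ := hdense
    obtain ⟨ℓ', hℓ', hle⟩ := exists_OPTL_window_le_of_dense ha hpos hε hL hLε hj hjn hj2
    have h1 : 1 ≤ ratio X Y := one_le_ratio
      (sum_pos (fun x hx => pos_of_mem_image_Icc hpos (hX hx)) hXn)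
      (sum_pos (fun y hy => pos_of_mem_image_Icc hpos (hY hy)) hYn)
    exact (inf'_le _ hℓ').trans (hle.trans (le_mul_of_one_le_right (by linarith [hε.1]) h1))
  · push Not at hdense
    exact (inf'_le _ hℓ).trans
      (OPTL_window_le_of_doubling ha hpos hε hL hLε hdense hX hY hXY hXn hYn hℓ htop hmax)
end

section
/- Let L be a positive integer and let I be a finite set of positive reals of size n with elements listed in sorted order I[1] ≤ … ≤ I[n], such that |I ∩ [z/2, z]| < L for every real z > 0. Then for every index 1 ≤ i ≤ n and every natural number k with i − k·L ≥ 1, it holds that I[i − k·L] ≤ 2^{−k} · I[i]. -/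
/-- **Geometric decay.** Let `I = {a 1 < … < a n}` be a sorted finite set of positive reals
such that every window `[z/2, z]` contains fewer than `L` elements of `I`. Then for all
`1 ≤ i ≤ n` and all `k` with `i − k·L ≥ 1` we have `a (i − k·L) ≤ 2^{−k} · a i`. -/
theorem geometric_decay_of_nowhere_dense (L : ℕ) (hL : 0 < L) (n : ℕ) (a : ℕ → ℝ)
    (hpos : ∀ i ∈ Finset.Icc 1 n, 0 < a i)
    (hsorted : ∀ i j, 1 ≤ i → i < j → j ≤ n → a i < a j)
    (hdense : ∀ z : ℝ, 0 < z →
      (((Finset.Icc 1 n).image a).filter (fun x => z / 2 ≤ x ∧ x ≤ z)).card < L) :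
    ∀ i, 1 ≤ i → i ≤ n → ∀ k : ℕ, k * L + 1 ≤ i →
      a (i - k * L) ≤ a i / 2 ^ k := by
  -- monotone (≤) on [1,n]
  have hmono : ∀ i j, 1 ≤ i → i ≤ j → j ≤ n → a i ≤ a j := by
    intro i j h1 hij hjn
    rcases eq_or_lt_of_le hij with rfl | h
    · exact le_refl _
    · exact (hsorted i j h1 h hjn).le
  -- key step: one window
  have key : ∀ j, L + 1 ≤ j → j ≤ n → a (j - L) ≤ a j / 2 := by
    intro j hLj hjn
    by_contra hcon
    push_neg at hcon
    have hjpos : 0 < a j := hpos j (Finset.mem_Icc.mpr ⟨by omega, hjn⟩)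
    have hd := hdense (a j) hjpos
    -- the set Icc (j-L) j maps injectively into the filtered set
    have hsub : (Finset.Icc (j - L) j).image a ⊆
        ((Finset.Icc 1 n).image a).filter (fun x => a j / 2 ≤ x ∧ x ≤ a j) := by
      intro x hx
      simp only [Finset.mem_image, Finset.mem_Icc] at hx
      obtain ⟨m, ⟨hm1, hm2⟩, rfl⟩ := hx
      have hm1' : 1 ≤ m := by omega
      have hmn : m ≤ n := le_trans hm2 hjn
      refine Finset.mem_filter.mpr ⟨Finset.mem_image.mpr ⟨m, Finset.mem_Icc.mpr ⟨hm1', hmn⟩, rfl⟩, ?_, ?_⟩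
      · calc a j / 2 ≤ a (j - L) := hcon.le
          _ ≤ a m := hmono _ _ (by omega) hm1 hmn
      · exact hmono _ _ hm1' hm2 hjn
    have hinj : Set.InjOn a (Finset.Icc (j - L) j) := by
      intro x hx y hy hxy
      simp only [Finset.coe_Icc, Set.mem_Icc] at hx hy
      by_contra hne
      rcases lt_or_gt_of_ne hne with h | h
      · exact absurd hxy (hsorted x y (by omega) h (by omega)).ne
      · exact absurd hxy.symm (hsorted y x (by omega) h (by omega)).ne
    have hcard : ((Finset.Icc (j - L) j).image a).card = L + 1 := by
      rw [Finset.card_image_of_injOn hinj, Nat.card_Icc]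
      omega
    have := Finset.card_le_card hsub
    omega
  intro i h1 hn k
  induction k with
  | zero => intro _; simp
  | succ k ih =>
    intro hk
    have hk' : k * L + 1 ≤ i := by
      have : k * L ≤ (k + 1) * L := Nat.mul_le_mul_right _ (by omega)
      omega
    have ihh := ih hk'
    have hstep : a (i - (k + 1) * L) ≤ a (i - k * L) / 2 := by
      have heq : i - (k + 1) * L = (i - k * L) - L := by
        rw [Nat.add_mul]; omega
      rw [heq]
      apply key
      · have : (k + 1) * L = k * L + L := by ring
        omega
      · omega
    have h2 : a (i - k * L) / 2 ≤ (a i / 2 ^ k) / 2 := by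
      linarith
    calc a (i - (k + 1) * L) ≤ a (i - k * L) / 2 := hstep
      _ ≤ (a i / 2 ^ k) / 2 := h2
      _ = a i / 2 ^ (k + 1) := by rw [pow_succ]; ring
end

section
/- Let β > 0 and let I be a finite set of size n consisting of positive reals that are each an integer multiple of β. Let 1 ≤ τ ≤ n, let T consist of the τ largest elements of I, and let B := I \ T. If |𝒮(B)| > n·max(I)/(β·2^τ) + 1, then there exist nonempty disjoint subsets X, Y ⊆ I with Σ(X) = Σ(Y) and (X ∪ Y) ∩ T ≠ ∅. -/
/-! Every subset sum of `I` is a multiple of `β` in `[0, n · max I]`, so there are at most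
`n · max I / β + 1` of them. The `|𝒮(B)| · 2^τ` sums `s + Σ(T')`, with `s ∈ 𝒮(B)` and `T' ⊆ T`,
therefore collide; the two colliding pairs have different `T'`, since otherwise their `s` would
agree too. The subsets `B₁ ∪ T₁` and `B₂ ∪ T₂` realising them are distinct with equal sums, and
removing their common part leaves the required `X` and `Y`. -/

open Finset

namespace Finset

variable {ι M : Type*} [DecidableEq ι]

theorem sdiff_nonempty_of_sum_eq_of_ne [AddCancelCommMonoid M] [PartialOrder M]
    [IsOrderedCancelAddMonoid M] {f : ι → M} {s t : Finset ι} (hf : ∀ i ∈ s ∪ t, 0 < f i)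
    (hst : s ≠ t) (h : ∑ i ∈ s, f i = ∑ i ∈ t, f i) : (s \ t).Nonempty := by
  by_contra hempty
  rw [not_nonempty_iff_eq_empty] at hempty
  have hts : t \ s = ∅ := by
    by_contra hne
    have hpos : 0 < ∑ i ∈ t \ s, f i :=
      sum_pos (fun i hi => hf i (mem_union_right s (mem_sdiff.1 hi).1))
        (nonempty_iff_ne_empty.2 hne)
    rw [← sum_sdiff_eq_sum_sdiff_iff.2 h, hempty, sum_empty] at hpos
    exact hpos.false
  exact hst (Subset.antisymm (sdiff_eq_empty_iff_subset.1 hempty) (sdiff_eq_empty_iff_subset.1 hts))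

theorem sdiff_union_sdiff_inter_nonempty {s t u : Finset ι} (h : s ∩ u ≠ t ∩ u) :
    ((s \ t ∪ t \ s) ∩ u).Nonempty := by
  rw [nonempty_iff_ne_empty, ← sup_eq_union, ← symmDiff_def, ← inf_eq_inter,
    inf_symmDiff_distrib_right, ← bot_eq_empty, Ne, symmDiff_eq_bot]
  exact h

theorem exists_inter_ne_sum_eq_of_card_lt [AddCancelCommMonoid M] [DecidableEq M]
    {f : ι → M} {B T : Finset ι} (G : Finset M) (hBT : Disjoint B T)
    (hG : ∀ A ⊆ B ∪ T, ∑ i ∈ A, f i ∈ G)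
    (hcard : G.card < (B.powerset.image fun A => ∑ i ∈ A, f i).card * 2 ^ T.card) :
    ∃ X ⊆ B ∪ T, ∃ Y ⊆ B ∪ T, X ∩ T ≠ Y ∩ T ∧ ∑ i ∈ X, f i = ∑ i ∈ Y, f i := by
  have hmaps : ∀ p ∈ (B.powerset.image fun A => ∑ i ∈ A, f i) ×ˢ T.powerset,
      p.1 + ∑ i ∈ p.2, f i ∈ G := by
    rintro ⟨s, T'⟩ hp
    simp only [mem_product, mem_image, mem_powerset] at hp
    obtain ⟨⟨B', hB', rfl⟩, hT'⟩ := hp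
    rw [← sum_union (hBT.mono hB' hT')]
    exact hG _ (union_subset_union hB' hT')
  obtain ⟨⟨s₁, T₁⟩, hp, ⟨s₂, T₂⟩, hq, hne, heq⟩ := exists_ne_map_eq_of_card_lt_of_maps_to
    (by rwa [card_product, card_powerset]) hmaps
  simp only [mem_product, mem_image, mem_powerset] at hp hq heq
  obtain ⟨⟨B₁, hB₁, rfl⟩, hT₁⟩ := hp
  obtain ⟨⟨B₂, hB₂, rfl⟩, hT₂⟩ := hq
  have hT₁₂ : T₁ ≠ T₂ := by
    rintro rfl
    exact hne (by rw [add_right_cancel heq])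
  refine ⟨B₁ ∪ T₁, union_subset_union hB₁ hT₁, B₂ ∪ T₂, union_subset_union hB₂ hT₂, ?_, ?_⟩
  · rwa [union_inter_distrib_right, union_inter_distrib_right, disjoint_iff_inter_eq_empty.1 (hBT.mono_left hB₁),
      disjoint_iff_inter_eq_empty.1 (hBT.mono_left hB₂), inter_eq_left.2 hT₁, inter_eq_left.2 hT₂, empty_union,
      empty_union]
  · rwa [sum_union (hBT.mono hB₁ hT₁), sum_union (hBT.mono hB₂ hT₂)]

end Finset

theorem exists_card_le_forall_subset_sum_mem {β : ℝ} (hβ : 0 < β) {I : Finset ℝ}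
    (hnonneg : ∀ x ∈ I, 0 ≤ x) (hmult : ∀ x ∈ I, ∃ k : ℤ, x = k * β) :
    ∃ G : Finset ℝ, (G.card : ℝ) ≤ I.sum id / β + 1 ∧ ∀ A ⊆ I, A.sum id ∈ G := by
  have hL : 0 ≤ I.sum id / β := div_nonneg (sum_nonneg hnonneg) hβ.le
  refine ⟨(range (⌊I.sum id / β⌋₊ + 1)).image fun k : ℕ => (k : ℝ) * β, ?_, ?_⟩
  · calc (((range (⌊I.sum id / β⌋₊ + 1)).image fun k : ℕ => (k : ℝ) * β).card : ℝ)
        ≤ (⌊I.sum id / β⌋₊ + 1 : ℕ) := by exact_mod_cast card_image_le.trans (card_range _).le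
      _ ≤ I.sum id / β + 1 := by push_cast; gcongr; exact Nat.floor_le hL
  · intro A hA
    have hmem : A.sum id ∈ AddSubgroup.zmultiples β := AddSubgroup.sum_mem _ fun x hx => by
      obtain ⟨k, hk⟩ := hmult x (hA hx)
      exact AddSubgroup.mem_zmultiples_iff.2 ⟨k, by rw [zsmul_eq_mul, hk]; rfl⟩
    obtain ⟨k, hk⟩ := AddSubgroup.mem_zmultiples_iff.1 hmem
    rw [zsmul_eq_mul] at hk
    have hk0 : (0 : ℝ) ≤ k := nonneg_of_mul_nonneg_left
      (hk ▸ sum_nonneg fun x hx => hnonneg x (hA hx)) hβ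
    lift k to ℕ using by exact_mod_cast hk0
    have hkL : (k : ℝ) ≤ I.sum id / β := by
      rw [le_div_iff₀ hβ]
      push_cast at hk
      rw [hk]
      exact sum_le_sum_of_subset_of_nonneg hA fun x hx _ => hnonneg x hx
    refine mem_image.2 ⟨k, mem_range.2 (Nat.lt_succ_of_le (Nat.le_floor hkL)), ?_⟩
    exact_mod_cast hk

/-- **Lemma 4.5 (existence part).** Let `I` be a finite set of `n` positive reals, each an
integer multiple of `β > 0`. Let `T` be the `τ` largest elements (`1 ≤ τ ≤ n`) and
`B := I \ T`. If `|𝒮(B)| > n·max(I)/(β·2^τ) + 1`, then there exist nonempty disjoint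
`X, Y ⊆ I` with `Σ(X) = Σ(Y)` and `(X ∪ Y) ∩ T ≠ ∅`. -/
theorem pigeonhole_with_top_item (β : ℝ) (hβ : 0 < β) (n τ : ℕ) (hτ1 : 1 ≤ τ) (hτn : τ ≤ n)
    (I : Finset ℝ) (hcard : I.card = n) (hpos : ∀ x ∈ I, 0 < x)
    (hmult : ∀ x ∈ I, ∃ k : ℤ, x = k * β)
    (T : Finset ℝ) (hT : T ⊆ I) (hTcard : T.card = τ)
    (hS : ((Finset.image (fun X => X.sum id) (I \ T).powerset).card : ℝ) >
      n * I.max' (by rw [← Finset.card_pos, hcard]; omega) / (β * 2 ^ τ) + 1) :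
    ∃ X Y : Finset ℝ, X ⊆ I ∧ Y ⊆ I ∧ Disjoint X Y ∧ X.Nonempty ∧ Y.Nonempty ∧
      X.sum id = Y.sum id ∧ ((X ∪ Y) ∩ T).Nonempty := by
  classical
  set M := I.max' (by rw [← Finset.card_pos, hcard]; omega)
  obtain ⟨G, hGcard, hG⟩ := exists_card_le_forall_subset_sum_mem hβ (fun x hx => (hpos x hx).le) hmult
  have hsumI : I.sum id ≤ n * M := by
    simpa [hcard] using sum_le_card_nsmul I id M fun x hx => I.le_max' x hx
  have h2τ : (2 : ℝ) ≤ 2 ^ τ := le_self_pow₀ one_le_two (by omega)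
  have hGS : (G.card : ℝ) < ((I \ T).powerset.image fun A => A.sum id).card * 2 ^ τ :=
    calc (G.card : ℝ) ≤ n * M / β + 1 := hGcard.trans (by gcongr)
      _ < (n * M / (β * 2 ^ τ) + 1) * 2 ^ τ := by
        rw [add_mul, div_mul_eq_mul_div, mul_div_mul_right _ _ (by positivity)]; linarith
      _ < _ := by gcongr
  obtain ⟨X₀, hX₀, Y₀, hY₀, hT₀, hsum⟩ := exists_inter_ne_sum_eq_of_card_lt (f := id) G
    sdiff_disjoint (by rwa [sdiff_union_of_subset hT]) (by rw [hTcard]; exact_mod_cast hGS)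
  rw [sdiff_union_of_subset hT] at hX₀ hY₀
  have hf : ∀ x ∈ X₀ ∪ Y₀, 0 < id x := fun x hx => hpos x (union_subset hX₀ hY₀ hx)
  have hne : X₀ ≠ Y₀ := fun h => hT₀ (h ▸ rfl)
  exact ⟨X₀ \ Y₀, Y₀ \ X₀, sdiff_subset.trans hX₀, sdiff_subset.trans hY₀, disjoint_sdiff_sdiff,
    sdiff_nonempty_of_sum_eq_of_ne hf hne hsum,
    sdiff_nonempty_of_sum_eq_of_ne (union_comm X₀ Y₀ ▸ hf) hne.symm hsum.symm,
    sum_sdiff_eq_sum_sdiff_iff.2 hsum, sdiff_union_sdiff_inter_nonempty hT₀⟩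
end

section
/- Let ε ∈ (0,1), δ > 0, and let n be a positive integer. Let X and Y be disjoint nonempty finite sets of positive reals with |X| + |Y| ≤ n. For x > 0 define the rounding r(x) := δ·⌈x/δ⌉. Suppose that Σ_{x∈X} r(x) = Σ_{y∈Y} r(y) and that δ ≤ (ε/(2n)) · max{r(z) : z ∈ X ∪ Y}. Then R(X,Y) ≤ 1 + ε. -/
section RoundUp

variable {δ : ℝ}

theorem le_mul_ceil_div (hδ : 0 < δ) (x : ℝ) : x ≤ δ * ⌈x / δ⌉ := by
  rw [← div_le_iff₀' hδ]
  exact Int.le_ceil _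

theorem mul_ceil_div_lt_add (hδ : 0 < δ) (x : ℝ) : δ * ⌈x / δ⌉ < x + δ := by
  rw [← lt_div_iff₀' hδ, add_div, div_self hδ.ne']
  exact Int.ceil_lt_add_one _

theorem sum_le_sum_mul_ceil_div (hδ : 0 < δ) (s : Finset ℝ) :
    ∑ x ∈ s, x ≤ ∑ x ∈ s, δ * ⌈x / δ⌉ :=
  Finset.sum_le_sum fun x _ => le_mul_ceil_div hδ x

theorem sum_mul_ceil_div_le (hδ : 0 < δ) (s : Finset ℝ) :
    ∑ x ∈ s, δ * ⌈x / δ⌉ ≤ ∑ x ∈ s, x + s.card * δ := by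
  calc ∑ x ∈ s, δ * ⌈x / δ⌉ ≤ ∑ x ∈ s, (x + δ) :=
        Finset.sum_le_sum fun x _ => (mul_ceil_div_lt_add hδ x).le
    _ = ∑ x ∈ s, x + s.card * δ := by
      rw [Finset.sum_add_distrib, Finset.sum_const, nsmul_eq_mul]

theorem mul_one_sub_half_le_sum (hδ : 0 < δ) {ε S : ℝ} {n : ℕ} {s : Finset ℝ} (hs : s.card ≤ n)
    (hnδ : n * δ ≤ ε / 2 * S) (hS : ∑ x ∈ s, δ * ⌈x / δ⌉ = S) :
    S * (1 - ε / 2) ≤ ∑ x ∈ s, x := by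
  have hsn : (s.card : ℝ) * δ ≤ n * δ := by gcongr
  linarith [sum_mul_ceil_div_le hδ s]

end RoundUp

theorem Finset.sup'_le_sum_of_nonneg {ι : Type*} {s : Finset ι} (hs : s.Nonempty) {f : ι → ℝ}
    (hf : ∀ i ∈ s, 0 ≤ f i) : s.sup' hs f ≤ ∑ i ∈ s, f i :=
  Finset.sup'_le hs f fun _ hi => Finset.single_le_sum hf hi

theorem Finset.sup'_union_le_of_sum_eq {ι : Type*} [DecidableEq ι] {s t : Finset ι}
    (hs : s.Nonempty) (ht : t.Nonempty) {f : ι → ℝ} (hf : ∀ i ∈ s ∪ t, 0 ≤ f i)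
    (hst : ∑ i ∈ s, f i = ∑ i ∈ t, f i) :
    (s ∪ t).sup' (hs.mono subset_union_left) f ≤ ∑ i ∈ s, f i := by
  rw [Finset.sup'_union hs ht, sup_le_iff]
  exact ⟨sup'_le_sum_of_nonneg hs fun i hi => hf i (mem_union_left t hi),
    hst ▸ sup'_le_sum_of_nonneg ht fun i hi => hf i (mem_union_right s hi)⟩

theorem nat_mul_div_two_mul_le {ε : ℝ} (hε : 0 ≤ ε) (n : ℕ) :
    (n : ℝ) * (ε / (2 * n)) ≤ ε / 2 := by
  rcases n.eq_zero_or_pos with rfl | hn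
  · simp only [Nat.cast_zero, zero_mul]; positivity
  · exact (by field_simp : (n : ℝ) * (ε / (2 * n)) = ε / 2).le

theorem le_one_add_mul_of_mul_one_sub_half_le {ε A B S : ℝ} (hε₀ : 0 ≤ ε) (hε₁ : ε ≤ 1)
    (hS : 0 ≤ S) (hA : A ≤ S) (hB : S * (1 - ε / 2) ≤ B) : A ≤ (1 + ε) * B :=
  calc A ≤ S := hA
    _ ≤ S + ε * (1 - ε) / 2 * S :=
      le_add_of_nonneg_right (by have := sub_nonneg.2 hε₁; positivity)
    _ = (1 + ε) * (S * (1 - ε / 2)) := by ring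
    _ ≤ (1 + ε) * B := by gcongr

theorem ratio_le_one_add {ε S : ℝ} (hε₀ : 0 ≤ ε) (hε₁ : ε ≤ 1) {X Y : Finset ℝ}
    (hX : 0 < ∑ x ∈ X, x) (hY : 0 < ∑ y ∈ Y, y)
    (hXS : ∑ x ∈ X, x ≤ S) (hYS : ∑ y ∈ Y, y ≤ S)
    (hSX : S * (1 - ε / 2) ≤ ∑ x ∈ X, x) (hSY : S * (1 - ε / 2) ≤ ∑ y ∈ Y, y) :
    ratio X Y ≤ 1 + ε :=
  max_le
    ((div_le_iff₀ hY).2 (le_one_add_mul_of_mul_one_sub_half_le hε₀ hε₁ (hX.le.trans hXS) hXS hSY))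
    ((div_le_iff₀ hX).2 (le_one_add_mul_of_mul_one_sub_half_le hε₀ hε₁ (hY.le.trans hYS) hYS hSX))

theorem rounding_one_general (ε δ : ℝ) (hε : ε ∈ Set.Ioo (0 : ℝ) 1) (hδ : 0 < δ)
    (n : ℕ)
    (X Y : Finset ℝ) (hX : X.Nonempty) (hY : Y.Nonempty)
    (hpos : ∀ x ∈ X ∪ Y, 0 < x) (hcard : X.card + Y.card ≤ n)
    (hsum : ∑ x ∈ X, δ * (⌈x / δ⌉ : ℝ) = ∑ y ∈ Y, δ * (⌈y / δ⌉ : ℝ))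
    (hδ2 : δ ≤ ε / (2 * n) *
      ((X ∪ Y).sup' (hX.inl) (fun z => δ * (⌈z / δ⌉ : ℝ)))) :
    ratio X Y ≤ 1 + ε := by
  obtain ⟨hε₀, hε₁⟩ := hε
  set S := ∑ x ∈ X, δ * (⌈x / δ⌉ : ℝ)
  have hround : ∀ z ∈ X ∪ Y, 0 ≤ δ * (⌈z / δ⌉ : ℝ) :=
    fun z hz => (hpos z hz).le.trans (le_mul_ceil_div hδ z)
  have hmax : (X ∪ Y).sup' hX.inl (fun z => δ * (⌈z / δ⌉ : ℝ)) ≤ S :=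
    Finset.sup'_union_le_of_sum_eq hX hY hround hsum
  have hnδ : n * δ ≤ ε / 2 * S :=
    calc n * δ ≤ n * (ε / (2 * n) * S) := by gcongr; exact hδ2.trans (by gcongr)
      _ ≤ ε / 2 * S := by
        rw [← mul_assoc]
        gcongr
        · exact Finset.sum_nonneg fun x hx => hround x (Finset.mem_union_left Y hx)
        · exact nat_mul_div_two_mul_le hε₀.le n
  exact ratio_le_one_add hε₀.le hε₁.le
    (Finset.sum_pos (fun x hx => hpos x (Finset.mem_union_left Y hx)) hX)
    (Finset.sum_pos (fun y hy => hpos y (Finset.mem_union_right X hy)) hY)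
    (sum_le_sum_mul_ceil_div hδ X) ((sum_le_sum_mul_ceil_div hδ Y).trans hsum.ge)
    (mul_one_sub_half_le_sum hδ (by omega) hnδ rfl)
    (mul_one_sub_half_le_sum hδ (by omega) hnδ hsum.symm)

/-- **Rounding I (Lemma 4.10).** If two disjoint nonempty finite sets `X, Y` of positive
reals, with `|X| + |Y| ≤ n`, have equal sums after rounding each element up to a multiple
of `δ`, and `δ ≤ (ε/(2n)) · max{r(z) : z ∈ X ∪ Y}`, then `R(X,Y) ≤ 1 + ε`. -/
theorem rounding_one (ε δ : ℝ) (hε : ε ∈ Set.Ioo (0 : ℝ) 1) (hδ : 0 < δ)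
    (n : ℕ) (hn : 0 < n)
    (X Y : Finset ℝ) (hd : Disjoint X Y) (hX : X.Nonempty) (hY : Y.Nonempty)
    (hpos : ∀ x ∈ X ∪ Y, 0 < x) (hcard : X.card + Y.card ≤ n)
    (hsum : ∑ x ∈ X, δ * (⌈x / δ⌉ : ℝ) = ∑ y ∈ Y, δ * (⌈y / δ⌉ : ℝ))
    (hδ2 : δ ≤ ε / (2 * n) *
      ((X ∪ Y).sup' (hX.inl) (fun z => δ * (⌈z / δ⌉ : ℝ)))) :
    ratio X Y ≤ 1 + ε :=
  rounding_one_general ε δ hε hδ n X Y hX hY hpos hcard hsum hδ2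
end

section
/- Let ε ∈ (0,1), let a₁, …, aₙ be distinct positive reals with n ≥ 2 and with OPT_L({a₁,…,aₙ}) ≤ 2, and let 0 < δ ≤ (ε/(9n)) · max_i a_i. Define ã_i := δ·⌈a_i/δ⌉. Let A, B ⊆ {1,…,n} be nonempty disjoint index sets containing some index attaining max_i ã_i and minimizing the rounded ratio max{Σ_{i∈A} ã_i / Σ_{i∈B} ã_i, Σ_{i∈B} ã_i / Σ_{i∈A} ã_i} among all such pairs of index sets. Then the unrounded sets X := {a_i : i ∈ A} and Y := {a_i : i ∈ B} satisfy R(X,Y) ≤ (1+ε) · OPT_L({a₁,…,aₙ}). -/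
open Finset

noncomputable def pairRatio (x y : ℝ) : ℝ :=
  max (x / y) (y / x)

section PairRatio

variable {x y : ℝ}

theorem pairRatio_le_iff (hx : 0 < x) (hy : 0 < y) {c : ℝ} :
    pairRatio x y ≤ c ↔ x ≤ c * y ∧ y ≤ c * x := by
  rw [pairRatio, max_le_iff, div_le_iff₀ hy, div_le_iff₀ hx]

theorem one_le_pairRatio (hx : 0 < x) (hy : 0 < y) : 1 ≤ pairRatio x y := by
  rcases le_total x y with h | h
  · exact (one_le_div hx |>.mpr h).trans (le_max_right _ _)
  · exact (one_le_div hy |>.mpr h).trans (le_max_left _ _)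

theorem le_mul_of_pairRatio_le (hx : 0 < x) (hy : 0 < y) {M q : ℝ} (hM : M ≤ x ∨ M ≤ y)
    (hq : pairRatio x y ≤ q) : M ≤ q * x ∧ M ≤ q * y := by
  have hq1 : 1 ≤ q := (one_le_pairRatio hx hy).trans hq
  obtain ⟨hxy, hyx⟩ := (pairRatio_le_iff hx hy).mp hq
  rcases hM with h | h
  · exact ⟨h.trans (le_mul_of_one_le_left hx.le hq1), h.trans hxy⟩
  · exact ⟨h.trans hyx, h.trans (le_mul_of_one_le_left hy.le hq1)⟩

variable {s₁ s₂ t₁ t₂ d c : ℝ}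

theorem pairRatio_le_add_of_mem_Icc (hs₁ : 0 < s₁) (hs₂ : 0 < s₂)
    (ht₁ : t₁ ∈ Set.Icc s₁ (s₁ + d)) (ht₂ : t₂ ∈ Set.Icc s₂ (s₂ + d)) {m : ℝ} (hm₁ : m ≤ s₁)
    (hm₂ : m ≤ s₂) (hc : 0 ≤ c) (hd : d ≤ c * m) :
    pairRatio t₁ t₂ ≤ pairRatio s₁ s₂ + c := by
  obtain ⟨h₁, h₂⟩ := (pairRatio_le_iff hs₁ hs₂).mp le_rfl
  rw [pairRatio_le_iff (hs₁.trans_le ht₁.1) (hs₂.trans_le ht₂.1)]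
  constructor <;> nlinarith [ht₁.1, ht₁.2, ht₂.1, ht₂.2, one_le_pairRatio hs₁ hs₂]

theorem pairRatio_le_div_of_mem_Icc (hs₁ : 0 < s₁) (hs₂ : 0 < s₂)
    (ht₁ : t₁ ∈ Set.Icc s₁ (s₁ + d)) (ht₂ : t₂ ∈ Set.Icc s₂ (s₂ + d)) (hc : c < 1)
    (hd₁ : d ≤ c * t₁) (hd₂ : d ≤ c * t₂) :
    pairRatio s₁ s₂ ≤ pairRatio t₁ t₂ / (1 - c) := by
  have ht₁0 := hs₁.trans_le ht₁.1
  have ht₂0 := hs₂.trans_le ht₂.1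
  obtain ⟨h₁, h₂⟩ := (pairRatio_le_iff ht₁0 ht₂0).mp le_rfl
  have hq := one_le_pairRatio ht₁0 ht₂0
  rw [pairRatio_le_iff hs₁ hs₂, div_mul_eq_mul_div, div_mul_eq_mul_div,
    le_div_iff₀ (by linarith), le_div_iff₀ (by linarith)]
  constructor <;> nlinarith [ht₁.1, ht₁.2, ht₂.1, ht₂.2]

theorem pairRatio_le_of_approx_optimal {ε M d sA sB tA tB sA' sB' tA' tB' : ℝ}
    (hε0 : 0 < ε) (hε1 : ε < 1) (hd : d ≤ ε * M / 9)
    (hsA : 0 < sA) (hsB : 0 < sB) (hsA' : 0 < sA') (hsB' : 0 < sB')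
    (htA : tA ∈ Set.Icc sA (sA + d)) (htB : tB ∈ Set.Icc sB (sB + d))
    (htA' : tA' ∈ Set.Icc sA' (sA' + d)) (htB' : tB' ∈ Set.Icc sB' (sB' + d))
    (hM : M ≤ tA ∨ M ≤ tB) (hM' : M ≤ sA' ∨ M ≤ sB') (hr : pairRatio sA' sB' ≤ 2)
    (hopt : pairRatio tA tB ≤ pairRatio tA' tB') :
    pairRatio sA sB ≤ (1 + ε) * pairRatio sA' sB' := by
  set r := pairRatio sA' sB'
  have hr1 : 1 ≤ r := one_le_pairRatio hsA' hsB'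
  obtain ⟨hMA', hMB'⟩ := le_mul_of_pairRatio_le hsA' hsB' hM' hr
  have hq : pairRatio tA tB ≤ r + 2 * ε / 9 :=
    hopt.trans <| pairRatio_le_add_of_mem_Icc hsA' hsB' htA' htB' (m := M / 2)
      (by linarith) (by linarith) (by positivity) (by linarith)
  obtain ⟨hMA, hMB⟩ :=
    le_mul_of_pairRatio_le (hsA.trans_le htA.1) (hsB.trans_le htB.1) hM (q := 3)
      (by linarith)
  calc pairRatio sA sB ≤ pairRatio tA tB / (1 - ε / 3) :=
        pairRatio_le_div_of_mem_Icc hsA hsB htA htB (by linarith) (by nlinarith) (by nlinarith)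
    _ ≤ (r + 2 * ε / 9) / (1 - ε / 3) := by gcongr; linarith
    _ ≤ (1 + ε) * r := by
        rw [div_le_iff₀ (by linarith)]
        nlinarith [mul_le_mul_of_nonneg_left hr1 (by nlinarith : (0 : ℝ) ≤ 2 * ε / 3 - ε ^ 2 / 3)]

end PairRatio

theorem le_sum_or_le_sum_of_mem_union {ι : Type*} [DecidableEq ι] {f : ι → ℝ}
    (hf : ∀ j, 0 ≤ f j) {A B : Finset ι} {i : ι} (hi : i ∈ A ∪ B) {c : ℝ} (hc : c ≤ f i) :
    c ≤ ∑ j ∈ A, f j ∨ c ≤ ∑ j ∈ B, f j := by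
  rcases mem_union.mp hi with h | h
  · exact .inl (hc.trans (single_le_sum (fun j _ => hf j) h))
  · exact .inr (hc.trans (single_le_sum (fun j _ => hf j) h))

section RoundUp

noncomputable def roundUp (δ x : ℝ) : ℝ :=
  δ * ⌈x / δ⌉

variable {δ : ℝ}

theorem le_roundUp (hδ : 0 < δ) (x : ℝ) : x ≤ roundUp δ x := by
  rw [roundUp, ← div_le_iff₀' hδ]
  exact Int.le_ceil _

theorem roundUp_lt_add (hδ : 0 < δ) (x : ℝ) : roundUp δ x < x + δ := by
  have := mul_lt_mul_of_pos_left (Int.ceil_lt_add_one (x / δ)) hδ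
  rwa [mul_add, mul_div_cancel₀ _ hδ.ne', mul_one] at this

theorem roundUp_mono (hδ : 0 < δ) : Monotone (roundUp δ) := fun _ _ h =>
  mul_le_mul_of_nonneg_left (Int.cast_mono (Int.ceil_mono (div_le_div_of_nonneg_right h hδ.le)))
    hδ.le

theorem sum_roundUp_mem_Icc {ι : Type*} [Fintype ι] (hδ : 0 < δ) (f : ι → ℝ) (s : Finset ι) :
    ∑ i ∈ s, roundUp δ (f i) ∈ Set.Icc (∑ i ∈ s, f i) (∑ i ∈ s, f i + Fintype.card ι * δ) := by
  refine ⟨sum_le_sum fun i _ => le_roundUp hδ (f i), ?_⟩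
  calc ∑ i ∈ s, roundUp δ (f i) ≤ ∑ i ∈ s, (f i + δ) :=
        sum_le_sum fun i _ => (roundUp_lt_add hδ (f i)).le
    _ = ∑ i ∈ s, f i + s.card * δ := by rw [sum_add_distrib, sum_const, nsmul_eq_mul]
    _ ≤ ∑ i ∈ s, f i + Fintype.card ι * δ := by gcongr; exact card_le_univ s

end RoundUp

theorem ratio_image {ι : Type*} [DecidableEq ι] {a : ι → ℝ} (ha : Function.Injective a)
    (A B : Finset ι) :
    ratio (A.image a) (B.image a) = pairRatio (∑ i ∈ A, a i) (∑ i ∈ B, a i) := by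
  simp only [ratio, pairRatio, sum_image ha.injOn, id]

theorem OPTL_mem {I : Finset ℝ} (hI : 1 < I.card) :
    OPTL I ∈ {r | ∃ X Y : Finset ℝ, X ⊆ I ∧ Y ⊆ I ∧ Disjoint X Y ∧
      X.Nonempty ∧ Y.Nonempty ∧ (∃ m ∈ X ∪ Y, ∀ x ∈ I, x ≤ m) ∧ r = ratio X Y} := by
  refine Set.Nonempty.csInf_mem ?_ ?_
  · have hne : I.Nonempty := card_pos.mp (by omega)
    obtain ⟨y, hy, hym⟩ := exists_mem_ne hI (I.max' hne)
    exact ⟨_, {I.max' hne}, {y}, by simpa using I.max'_mem hne, by simpa,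
      by simpa [eq_comm] using hym, singleton_nonempty _, singleton_nonempty _,
      ⟨I.max' hne, by simp, fun x hx => I.le_max' x hx⟩, rfl⟩
  · refine ((I.powerset ×ˢ I.powerset).finite_toSet.image fun p => ratio p.1 p.2).subset ?_
    rintro r ⟨X, Y, hX, hY, -, -, -, -, rfl⟩
    exact ⟨(X, Y), by simp [hX, hY], rfl⟩

theorem exists_index_pair_eq_OPTL {ι : Type*} [Fintype ι] [DecidableEq ι] {a : ι → ℝ}
    (ha : Function.Injective a) (hcard : 1 < Fintype.card ι) :
    ∃ A B : Finset ι, A.Nonempty ∧ B.Nonempty ∧ Disjoint A B ∧ (∃ i ∈ A ∪ B, ∀ j, a j ≤ a i) ∧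
      OPTL (univ.image a) = pairRatio (∑ i ∈ A, a i) (∑ i ∈ B, a i) := by
  have hI : 1 < (univ.image a).card := by rwa [card_image_of_injective _ ha]
  obtain ⟨X, Y, hX, hY, hXY, hXne, hYne, ⟨m, hm, hmax⟩, hopt⟩ := OPTL_mem hI
  obtain ⟨A, -, rfl⟩ := subset_image_iff.mp hX
  obtain ⟨B, -, rfl⟩ := subset_image_iff.mp hY
  rw [← image_union, mem_image] at hm
  obtain ⟨i, hi, rfl⟩ := hm
  exact ⟨A, B, image_nonempty.mp hXne, image_nonempty.mp hYne, (disjoint_image ha).mp hXY,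
    ⟨i, hi, fun j => hmax _ (mem_image_of_mem _ (mem_univ j))⟩, hopt.trans (ratio_image ha A B)⟩

/-- **Rounding II (Lemma 4.11).** Suppose `OPT_L({a₁,…,aₙ}) ≤ 2` and
`0 < δ ≤ (ε/(9n))·max_i a_i`. If the index sets `A, B` form an optimal solution for the
instance rounded up to multiples of `δ` (nonempty, disjoint, containing an index attaining
the rounded maximum, and minimizing the rounded ratio among all such pairs), then the
corresponding unrounded sets `X = {a_i : i ∈ A}`, `Y = {a_i : i ∈ B}` satisfy
`R(X,Y) ≤ (1+ε) · OPT_L({a₁,…,aₙ})`. -/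
theorem rounding_two (ε : ℝ) (hε : ε ∈ Set.Ioo (0 : ℝ) 1)
    (n : ℕ) (hn : 2 ≤ n) (a : Fin n → ℝ)
    (hinj : Function.Injective a) (hpos : ∀ i, 0 < a i)
    (hopt : OPTL (Finset.univ.image a) ≤ 2)
    (δ : ℝ) (hδ0 : 0 < δ)
    (hδ : δ ≤ ε / (9 * n) *
      (Finset.univ.sup' ⟨⟨0, by omega⟩, Finset.mem_univ _⟩ a))
    (A B : Finset (Fin n)) (hA : A.Nonempty) (hB : B.Nonempty)
    (hmax : ∃ i ∈ A ∪ B, ∀ j, δ * (⌈a j / δ⌉ : ℝ) ≤ δ * (⌈a i / δ⌉ : ℝ))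
    (hoptAB : ∀ A' B' : Finset (Fin n), A'.Nonempty → B'.Nonempty → Disjoint A' B' →
      (∃ i ∈ A' ∪ B', ∀ j, δ * (⌈a j / δ⌉ : ℝ) ≤ δ * (⌈a i / δ⌉ : ℝ)) →
      max ((∑ i ∈ A, δ * (⌈a i / δ⌉ : ℝ)) / (∑ i ∈ B, δ * (⌈a i / δ⌉ : ℝ)))
          ((∑ i ∈ B, δ * (⌈a i / δ⌉ : ℝ)) / (∑ i ∈ A, δ * (⌈a i / δ⌉ : ℝ)))
      ≤ max ((∑ i ∈ A', δ * (⌈a i / δ⌉ : ℝ)) / (∑ i ∈ B', δ * (⌈a i / δ⌉ : ℝ)))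
            ((∑ i ∈ B', δ * (⌈a i / δ⌉ : ℝ)) / (∑ i ∈ A', δ * (⌈a i / δ⌉ : ℝ)))) :
    ratio (A.image a) (B.image a) ≤ (1 + ε) * OPTL (Finset.univ.image a) := by
  obtain ⟨hε0, hε1⟩ := hε
  obtain ⟨A', B', hA', hB', hA'B', ⟨i', hi', hi'max⟩, hOPT⟩ :=
    exists_index_pair_eq_OPTL hinj (by simp; omega : 1 < Fintype.card (Fin n))
  obtain ⟨i, hi, himax⟩ := hmax
  set M := univ.sup' ⟨⟨0, by omega⟩, mem_univ _⟩ a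
  have hd : Fintype.card (Fin n) * δ ≤ ε * M / 9 := by
    have hn0 : (0 : ℝ) < n := by positivity
    calc Fintype.card (Fin n) * δ ≤ n * (ε / (9 * n) * M) := by
          simpa using mul_le_mul_of_nonneg_left hδ hn0.le
      _ = ε * M / 9 := by field_simp
  have hround := sum_roundUp_mem_Icc hδ0 a
  have hroundPos (j : Fin n) : 0 ≤ roundUp δ (a j) := (hpos j).le.trans (le_roundUp hδ0 _)
  rw [ratio_image hinj, hOPT]
  rw [hOPT] at hopt
  exact pairRatio_le_of_approx_optimal hε0 hε1 hd
    (sum_pos (fun j _ => hpos j) hA) (sum_pos (fun j _ => hpos j) hB)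
    (sum_pos (fun j _ => hpos j) hA') (sum_pos (fun j _ => hpos j) hB')
    (hround A) (hround B) (hround A') (hround B')
    (le_sum_or_le_sum_of_mem_union hroundPos hi
      (sup'_le _ _ fun j _ => (le_roundUp hδ0 _).trans (himax j)))
    (le_sum_or_le_sum_of_mem_union (fun j => (hpos j).le) hi' (sup'_le _ _ fun j _ => hi'max j))
    hopt (hoptAB A' B' hA' hB' hA'B' ⟨i', hi', fun j => roundUp_mono hδ0 (hi'max j)⟩)
end

section
/- Let B be a finite set of positive reals with |B| ≤ n, and let 0 < β ≤ α. Define the rounded subset-sum sets 𝒮_β := {Σ_{x∈X} β·⌈x/β⌉ : X ⊆ B} and 𝒮_α := {Σ_{x∈X} α·⌈x/α⌉ : X ⊆ B}. Then |𝒮_α| ≤ (2n+1) · |𝒮_β|. -/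
/-- **Claim 4.13.** For a finite set `B` of at most `n` positive reals and roundings to
multiples of `0 < β ≤ α`, the number of `α`-rounded subset sums is at most `(2n+1)` times
the number of `β`-rounded subset sums. -/
theorem rounded_subset_sums_compare (n : ℕ) (B : Finset ℝ) (hpos : ∀ x ∈ B, 0 < x)
    (hcard : B.card ≤ n) (α β : ℝ) (hβ : 0 < β) (hβα : β ≤ α) :
    (Finset.image (fun X => ∑ x ∈ X, α * (⌈x / α⌉ : ℝ)) B.powerset).card
      ≤ (2 * n + 1) *
        (Finset.image (fun X => ∑ x ∈ X, β * (⌈x / β⌉ : ℝ)) B.powerset).card := by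
  classical
  have hα : (0:ℝ) < α := lt_of_lt_of_le hβ hβα
  set Sα := Finset.image (fun X => ∑ x ∈ X, α * (⌈x / α⌉ : ℝ)) B.powerset with hSα
  set Sβ := Finset.image (fun X => ∑ x ∈ X, β * (⌈x / β⌉ : ℝ)) B.powerset with hSβ
  have hsub : Sα ⊆ Finset.image
      (fun p : ℝ × ℤ => α * ((⌈p.1 / α⌉ + p.2 : ℤ) : ℝ))
      (Sβ ×ˢ Finset.Icc (-(n:ℤ)) (n:ℤ)) := by
    intro v hv
    rw [hSα, Finset.mem_image] at hv
    obtain ⟨X, hXp, rfl⟩ := hv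
    rw [Finset.mem_powerset] at hXp
    have hXn : (X.card : ℝ) ≤ (n : ℝ) := by
      exact_mod_cast le_trans (Finset.card_le_card hXp) hcard
    set m : ℤ := ∑ x ∈ X, ⌈x / α⌉ with hm
    set s : ℝ := ∑ x ∈ X, β * (⌈x / β⌉ : ℝ) with hs
    have hvm : (∑ x ∈ X, α * (⌈x / α⌉ : ℝ)) = α * (m : ℝ) := by
      push_cast [hm]
      rw [Finset.mul_sum]
    -- per-element bounds
    have hup : α * (m:ℝ) - s ≤ (n:ℝ) * α := by
      have h1 : ∀ x ∈ X, α * (⌈x / α⌉ : ℝ) - β * (⌈x / β⌉ : ℝ) ≤ α := by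
        intro x hx
        have hb : x ≤ β * (⌈x / β⌉ : ℝ) := by
          have := Int.le_ceil (x / β)
          calc x = β * (x / β) := by field_simp
            _ ≤ β * (⌈x / β⌉ : ℝ) := by
              exact mul_le_mul_of_nonneg_left this hβ.le
        have ha : α * (⌈x / α⌉ : ℝ) ≤ x + α := by
          have := (Int.ceil_lt_add_one (x / α)).le
          calc α * (⌈x / α⌉ : ℝ) ≤ α * (x / α + 1) :=
                mul_le_mul_of_nonneg_left this hα.le
            _ = x + α := by field_simp
        linarith
      have := Finset.sum_le_card_nsmul X _ α h1
      rw [Finset.sum_sub_distrib] at this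
      rw [hvm.symm, hs]
      have hX : (X.card : ℝ) * α ≤ (n:ℝ) * α :=
        mul_le_mul_of_nonneg_right hXn hα.le
      simp only [nsmul_eq_mul] at this
      linarith
    have hlo : -((n:ℝ) * β) ≤ α * (m:ℝ) - s := by
      have h1 : ∀ x ∈ X, -β ≤ α * (⌈x / α⌉ : ℝ) - β * (⌈x / β⌉ : ℝ) := by
        intro x hx
        have ha : x ≤ α * (⌈x / α⌉ : ℝ) := by
          have := Int.le_ceil (x / α)
          calc x = α * (x / α) := by field_simp
            _ ≤ α * (⌈x / α⌉ : ℝ) := mul_le_mul_of_nonneg_left this hα.le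
        have hb : β * (⌈x / β⌉ : ℝ) ≤ x + β := by
          have := (Int.ceil_lt_add_one (x / β)).le
          calc β * (⌈x / β⌉ : ℝ) ≤ β * (x / β + 1) :=
                mul_le_mul_of_nonneg_left this hβ.le
            _ = x + β := by field_simp
        linarith
      have := Finset.card_nsmul_le_sum X _ (-β) h1
      rw [Finset.sum_sub_distrib] at this
      rw [hvm.symm, hs]
      have hX : -((n:ℝ) * β) ≤ (X.card : ℝ) * (-β) := by
        have := mul_le_mul_of_nonneg_right hXn hβ.le
        linarith
      simp only [nsmul_eq_mul] at this
      linarith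
    set k : ℤ := m - ⌈s / α⌉ with hk
    have hcs1 : s ≤ α * (⌈s / α⌉ : ℝ) := by
      have := Int.le_ceil (s / α)
      calc s = α * (s / α) := by field_simp
        _ ≤ α * (⌈s / α⌉ : ℝ) := mul_le_mul_of_nonneg_left this hα.le
    have hcs2 : α * (⌈s / α⌉ : ℝ) < s + α := by
      have := Int.ceil_lt_add_one (s / α)
      calc α * (⌈s / α⌉ : ℝ) < α * (s / α + 1) := by
            exact (mul_lt_mul_iff_right₀ hα).2 this
        _ = s + α := by field_simp
    have hk1 : (k : ℝ) ≤ n := by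
      have : α * (k : ℝ) ≤ (n:ℝ) * α := by
        push_cast [hk]; nlinarith
      nlinarith
    have hk2 : -(n:ℝ) ≤ (k : ℝ) := by
      have hβα' : (n:ℝ) * β ≤ (n:ℝ) * α :=
        mul_le_mul_of_nonneg_left hβα (Nat.cast_nonneg n)
      have hgt : α * ((k:ℝ) + 1) > -((n:ℝ) * α) := by
        push_cast [hk]; nlinarith
      by_contra h
      push_neg at h
      have hki : (k:ℝ) ≤ -(n:ℝ) - 1 := by
        have : (k:ℤ) < -(n:ℤ) := by exact_mod_cast h
        have : (k:ℤ) ≤ -(n:ℤ) - 1 := by omega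
        exact_mod_cast this
      nlinarith
    refine Finset.mem_image.2 ⟨(s, k), ?_, ?_⟩
    · refine Finset.mem_product.2 ⟨?_, ?_⟩
      · exact Finset.mem_image.2 ⟨X, Finset.mem_powerset.2 hXp, rfl⟩
      · refine Finset.mem_Icc.2 ⟨?_, ?_⟩
        · exact_mod_cast hk2
        · exact_mod_cast hk1
    · simp only [hk]
      rw [hvm]
      push_cast
      ring
  calc Sα.card ≤ ((Sβ ×ˢ Finset.Icc (-(n:ℤ)) (n:ℤ)).image _).card :=
        Finset.card_le_card hsub
    _ ≤ (Sβ ×ˢ Finset.Icc (-(n:ℤ)) (n:ℤ)).card := Finset.card_image_le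
    _ = Sβ.card * (2 * n + 1) := by
        rw [Finset.card_product, Int.card_Icc]
        congr 1
        simp [Int.toNat_of_nonneg]
        omega
    _ = (2 * n + 1) * Sβ.card := Nat.mul_comm _ _
end

section
/- Let I be a finite set of positive reals with |I| ≥ 2, let m := max(I), and let s := Σ(I \ {m}). If s ≤ m, then OPT_L(I) = m/s, and this optimum is attained by X = {m} and Y = I \ {m}. -/
/-- **Case `s ≤ m` of Lemma 4.14.** If `m = max(I)` and `s = Σ(I \ {m}) ≤ m`, then
`OPT_L(I) = m/s`, attained by `X = {m}` and `Y = I \ {m}`. -/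
theorem optL_of_dominant_max (I : Finset ℝ) (hpos : ∀ x ∈ I, 0 < x)
    (hcard : 2 ≤ I.card)
    (m : ℝ) (hm : m = I.max' (by rw [← Finset.card_pos]; omega))
    (s : ℝ) (hs : s = (I.erase m).sum id) (hsm : s ≤ m) :
    OPTL I = m / s ∧ ratio {m} (I.erase m) = OPTL I := by
  have hImem : m ∈ I := hm ▸ I.max'_mem _
  have hmax : ∀ x ∈ I, x ≤ m := fun x hx => hm ▸ I.le_max' x hx
  have hEne : (I.erase m).Nonempty := by
    rw [← Finset.card_pos, Finset.card_erase_of_mem hImem]; omega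
  have hspos : 0 < s := by
    rw [hs]
    exact Finset.sum_pos (fun x hx => hpos x (Finset.mem_of_mem_erase hx)) hEne
  have hmpos : 0 < m := lt_of_lt_of_le hspos hsm
  -- key lemma: sum over subset of erase is ≤ s, positive
  have hsumY : ∀ Y : Finset ℝ, Y ⊆ I.erase m → Y.sum id ≤ s := by
    intro Y hY
    rw [hs]
    exact Finset.sum_le_sum_of_subset_of_nonneg hY
      (fun x hx _ => (hpos x (Finset.mem_of_mem_erase hx)).le)
  have hsumpos : ∀ Y : Finset ℝ, Y ⊆ I → Y.Nonempty → 0 < Y.sum id :=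
    fun Y hY hne => Finset.sum_pos (fun x hx => hpos x (hY hx)) hne
  have hsumm : ∀ X : Finset ℝ, X ⊆ I → m ∈ X → m ≤ X.sum id := by
    intro X hX hmX
    simpa using Finset.single_le_sum (f := id)
      (fun x hx => (hpos x (hX hx)).le) hmX
  -- ratio of the witness
  have hrat : ratio {m} (I.erase m) = m / s := by
    unfold ratio
    rw [Finset.sum_singleton, ← hs]
    have h1 : s / m ≤ m / s := le_trans (div_le_one_of_le₀ hsm hmpos.le)
      ((one_le_div hspos).mpr hsm)
    simp [id, max_eq_left h1]
  -- membership of m/s in the set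
  have hmem : m / s ∈ {r | ∃ X Y : Finset ℝ, X ⊆ I ∧ Y ⊆ I ∧ Disjoint X Y ∧
      X.Nonempty ∧ Y.Nonempty ∧ (∃ m' ∈ X ∪ Y, ∀ x ∈ I, x ≤ m') ∧ r = ratio X Y} := by
    refine ⟨{m}, I.erase m, by simpa using hImem, Finset.erase_subset _ _, ?_,
      Finset.singleton_nonempty m, hEne, ⟨m, by simp, hmax⟩, hrat.symm⟩
    simp [Finset.disjoint_left]
  -- lower bound
  have hlb : ∀ r ∈ {r | ∃ X Y : Finset ℝ, X ⊆ I ∧ Y ⊆ I ∧ Disjoint X Y ∧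
      X.Nonempty ∧ Y.Nonempty ∧ (∃ m' ∈ X ∪ Y, ∀ x ∈ I, x ≤ m') ∧ r = ratio X Y},
      m / s ≤ r := by
    rintro r ⟨X, Y, hX, hY, hdisj, hXne, hYne, ⟨m', hm', hm'max⟩, rfl⟩
    have hm'I : m' ∈ I := by
      rcases Finset.mem_union.mp hm' with h | h
      exacts [hX h, hY h]
    have hm'm : m' = m := le_antisymm (hmax m' hm'I) (hm'max m hImem)
    rw [hm'm] at hm'
    have key : ∀ A B : Finset ℝ, A ⊆ I → B ⊆ I → Disjoint A B → A.Nonempty →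
        B.Nonempty → m ∈ A → m / s ≤ max (A.sum id / B.sum id) (B.sum id / A.sum id) := by
      intro A B hA hB hd hAne hBne hmA
      have hBsub : B ⊆ I.erase m := fun x hx =>
        Finset.mem_erase.mpr ⟨fun h => Finset.disjoint_left.mp hd hmA (h ▸ hx), hB hx⟩
      have h1 : m / s ≤ A.sum id / B.sum id :=
        div_le_div₀ (le_trans hmpos.le (hsumm A hA hmA)) (hsumm A hA hmA)
          (hsumpos B hB hBne) (hsumY B hBsub)
      exact le_trans h1 (le_max_left _ _)
    rcases Finset.mem_union.mp hm' with h | h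
    · exact key X Y hX hY hdisj hXne hYne h
    · rw [show ratio X Y = max (Y.sum id / X.sum id) (X.sum id / Y.sum id) from
        max_comm _ _]
      exact key Y X hY hX hdisj.symm hYne hXne h
  have hOPT : OPTL I = m / s := by
    unfold OPTL
    exact le_antisymm (csInf_le ⟨m / s, hlb⟩ hmem) (le_csInf ⟨m / s, hmem⟩ hlb)
  exact ⟨hOPT, by rw [hrat, hOPT]⟩
end
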